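/- arXiv:1708.08226 — 4 statements merged into one kernel-verified Lean document; each statement's English description precedes it below -/
import Mathlib

section
/- Let d ≥ 1, let b : ℝ^d → ℂ be a smooth function of at most polynomial growth, let τ : ℝ^d → ℂ be a smooth function such that τ and all its iterated derivatives have at most polynomial growth, and let ψ : ℝ^d → ℂ be a Schwartz function. For n ∈ ℕ let τ_n denote the degree-n homogeneous term of the Taylor series of τ at 0. Then for every N ∈ ℕ there exists a constant C_N > 0 such that for every integer k ≥ 1, | ∫_{ℝ^d} b(X) τ(X/k) ψ(X) dX − Σ_{n=0}^{N} k^{-n} ∫_{ℝ^d} b(X) τ_n(X) ψ(X) dX | ≤ C_N k^{-(N+1)}. (In particular, the integrals ∫ b(X) τ(X/k) ψ(X) dX admit the asymptotic expansion Σ_{n=0}^{∞} k^{-n} ∫ b(X) τ_n(X) ψ(X) dX as k → ∞.) -/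
open MeasureTheory Finset

section Helpers

lemma iterWithin_Icc {g : ℝ → ℂ} {n : ℕ} (hg : ContDiff ℝ (n : ℕ∞) g) {x : ℝ}
    (hx : x ∈ Set.Icc (0:ℝ) 1) :
    iteratedDerivWithin n g (Set.Icc 0 1) x = iteratedDeriv n g x := by
  rw [iteratedDerivWithin_eq_iteratedFDerivWithin, iteratedDeriv_eq_iteratedFDeriv]
  congr 1
  have h := (contDiff_iff_ftaylorSeries.mp hg).hasFTaylorSeriesUpToOn (Set.Icc (0:ℝ) 1)
  exact (h.eq_iteratedFDerivWithin_of_uniqueDiffOn le_rfl (uniqueDiffOn_Icc one_pos) hx).symm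

/-- Pointwise Taylor remainder bound along a segment, for a smooth function on a normed space. -/
lemma taylor_segment_bound {E : Type*} [NormedAddCommGroup E] [NormedSpace ℝ E]
    (τ : E → ℂ) (hτ : ContDiff ℝ (⊤ : ℕ∞) τ) (N : ℕ) (Y : E) (C : ℝ)
    (hC : ∀ t : ℝ, t ∈ Set.Icc (0:ℝ) 1 → ‖iteratedFDeriv ℝ (N+1) τ (t • Y)‖ ≤ C) :
    ‖τ Y - ∑ n ∈ Finset.range (N + 1),
        ((n.factorial : ℂ))⁻¹ * iteratedFDeriv ℝ n τ 0 (fun _ => Y)‖ ≤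
      C * ‖Y‖ ^ (N + 1) / N.factorial := by
  set L : ℝ →L[ℝ] E := ContinuousLinearMap.toSpanSingleton ℝ Y with hL
  set g : ℝ → ℂ := τ ∘ L with hg_def
  have hg : ContDiff ℝ (⊤ : ℕ∞) g := hτ.comp L.contDiff
  have hg' : ∀ (n : ℕ) (t : ℝ), iteratedDeriv n g t
      = iteratedFDeriv ℝ n τ (t • Y) (fun _ => Y) := by
    intro n t
    rw [iteratedDeriv_eq_iteratedFDeriv,
      L.iteratedFDeriv_comp_right hτ t (by exact_mod_cast le_top)]
    simp [hL, ContinuousLinearMap.toSpanSingleton_apply]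
  have h1 : g 1 = τ Y := by simp [hg_def, hL, ContinuousLinearMap.toSpanSingleton_apply]
  have hmain := taylor_mean_remainder_bound (f := g) (a := 0) (b := 1)
      (C := C * ‖Y‖ ^ (N + 1)) (x := 1) (n := N) zero_le_one
      ((hg.of_le (by exact_mod_cast le_top)).contDiffOn)
      (Set.right_mem_Icc.mpr zero_le_one) ?_
  · have htay : taylorWithinEval g N (Set.Icc 0 1) 0 1 =
        ∑ n ∈ Finset.range (N + 1),
          ((n.factorial : ℂ))⁻¹ * iteratedFDeriv ℝ n τ 0 (fun _ => Y) := by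
      rw [taylor_within_apply]
      refine Finset.sum_congr rfl fun n hn => ?_
      rw [iterWithin_Icc ((hg.of_le (by exact_mod_cast le_top))) (Set.left_mem_Icc.mpr zero_le_one), hg' n 0]
      rw [zero_smul]
      simp only [sub_zero, one_pow, mul_one]
      rw [← Complex.ofReal_natCast, ← Complex.ofReal_inv, Complex.real_smul]
    rw [h1, htay] at hmain
    calc _ ≤ C * ‖Y‖ ^ (N + 1) * (1 - 0) ^ (N + 1) / N.factorial := hmain
    _ = C * ‖Y‖ ^ (N + 1) / N.factorial := by norm_num
  · intro y hy
    rw [iterWithin_Icc ((hg.of_le (by exact_mod_cast le_top))) hy, hg']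
    calc ‖iteratedFDeriv ℝ (N+1) τ (y • Y) (fun _ => Y)‖
        ≤ ‖iteratedFDeriv ℝ (N+1) τ (y • Y)‖ * ∏ _i : Fin (N+1), ‖Y‖ :=
          (iteratedFDeriv ℝ (N+1) τ (y • Y)).le_opNorm _
      _ ≤ C * ‖Y‖ ^ (N + 1) := by
          rw [Finset.prod_const, Finset.card_univ, Fintype.card_fin]
          exact mul_le_mul_of_nonneg_right (hC y hy) (by positivity)

end Helpers


lemma integrable_poly_schwartz {d : ℕ} (ψ : SchwartzMap (EuclideanSpace ℝ (Fin d)) ℂ) (p : ℕ) :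
    Integrable (fun X => (1 + ‖X‖) ^ p * ‖ψ X‖) := by
  have h : ∀ X : EuclideanSpace ℝ (Fin d), (1 + ‖X‖) ^ p * ‖ψ X‖
      = ∑ j ∈ Finset.range (p + 1), (p.choose j : ℝ) * (‖X‖ ^ j * ‖ψ X‖) := by
    intro X
    rw [add_comm, add_pow, Finset.sum_mul]
    refine Finset.sum_congr rfl fun j _ => ?_
    ring
  simp_rw [h]
  exact integrable_finset_sum _ fun j _ =>
    (ψ.integrable_pow_mul (volume) j).const_mul _

lemma integrable_dom {d : ℕ} (ψ : SchwartzMap (EuclideanSpace ℝ (Fin d)) ℂ)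
    {f : EuclideanSpace ℝ (Fin d) → ℂ} (hf : Continuous f) (c : ℝ) (p : ℕ)
    (h : ∀ X, ‖f X‖ ≤ c * ((1 + ‖X‖) ^ p * ‖ψ X‖)) : Integrable f := by
  refine ((integrable_poly_schwartz ψ p).const_mul c).mono'
    hf.aestronglyMeasurable (Filter.Eventually.of_forall h)

/-- asymptotic expansion of `∫ b(X) τ(X/k) ψ(X) dX` obtained by
replacing `τ` by its Taylor series at the origin. -/
theorem stmt_0 (d : ℕ) (hd : 1 ≤ d)
    (b τ : EuclideanSpace ℝ (Fin d) → ℂ)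
    (ψ : SchwartzMap (EuclideanSpace ℝ (Fin d)) ℂ)
    (hb_smooth : ContDiff ℝ (⊤ : ℕ∞) b)
    (hb_growth : ∃ C : ℝ, 0 < C ∧ ∃ m : ℕ, ∀ X, ‖b X‖ ≤ C * (1 + ‖X‖) ^ m)
    (hτ_smooth : ContDiff ℝ (⊤ : ℕ∞) τ)
    (hτ_growth : ∀ n : ℕ, ∃ C : ℝ, 0 < C ∧ ∃ m : ℕ, ∀ X,
        ‖iteratedFDeriv ℝ n τ X‖ ≤ C * (1 + ‖X‖) ^ m)
    (N : ℕ) :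
    ∃ C : ℝ, 0 < C ∧ ∀ k : ℕ, 1 ≤ k →
      ‖(∫ X, b X * τ ((k : ℝ)⁻¹ • X) * ψ X) -
        ∑ n ∈ Finset.range (N + 1), ((k : ℂ) ^ n)⁻¹ *
          ∫ X, b X * ((n.factorial : ℂ)⁻¹ *
            iteratedFDeriv ℝ n τ 0 (fun _ => X)) * ψ X‖ ≤
      C * ((k : ℝ) ^ (N + 1))⁻¹ := by
  obtain ⟨Cb, hCb, mb, hb⟩ := hb_growth
  obtain ⟨C0, hC0, m0, h0⟩ := hτ_growth 0
  obtain ⟨C1, hC1, m1, h1⟩ := hτ_growth (N + 1)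
  have hone : ∀ X : EuclideanSpace ℝ (Fin d), ‖X‖ ≤ 1 + ‖X‖ := fun X => by linarith [norm_nonneg X]
  set p : ℕ := mb + m1 + (N + 1) with hp
  set I : ℝ := ∫ X : EuclideanSpace ℝ (Fin d), (1 + ‖X‖) ^ p * ‖ψ X‖ with hI
  have hI0 : 0 ≤ I := integral_nonneg fun X => by positivity
  set c0 : ℝ := Cb * C1 / N.factorial with hc0
  have hc0pos : 0 < c0 := by positivity
  refine ⟨c0 * I + 1, by positivity, fun k hk => ?_⟩
  set ε : ℝ := (k : ℝ)⁻¹ with hε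
  have hk0 : (0 : ℝ) < (k : ℝ) := by exact_mod_cast Nat.lt_of_lt_of_le Nat.zero_lt_one hk
  have hε0 : 0 < ε := inv_pos.mpr hk0
  have hε1 : ε ≤ 1 := by
    rw [hε]
    apply inv_le_one_of_one_le₀
    exact_mod_cast hk
  -- the integrand families
  set g : ℕ → EuclideanSpace ℝ (Fin d) → ℂ := fun n X =>
    b X * ((n.factorial : ℂ)⁻¹ * iteratedFDeriv ℝ n τ 0 (fun _ => X)) * ψ X with hg
  set f : EuclideanSpace ℝ (Fin d) → ℂ := fun X => b X * τ (ε • X) * ψ X with hf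
  -- integrability of f
  have hf_int : Integrable f := by
    refine integrable_dom ψ ?_ (Cb * C0) (mb + m0) ?_
    · exact (hb_smooth.continuous.mul
        (hτ_smooth.continuous.comp (continuous_const_smul ε))).mul ψ.continuous
    · intro X
      have hτb : ‖τ (ε • X)‖ ≤ C0 * (1 + ‖X‖) ^ m0 := by
        have := h0 (ε • X)
        rw [norm_iteratedFDeriv_zero] at this
        refine this.trans ?_
        have : ‖ε • X‖ ≤ ‖X‖ := by
          rw [norm_smul, Real.norm_eq_abs, abs_of_pos hε0]
          calc ε * ‖X‖ ≤ 1 * ‖X‖ := mul_le_mul_of_nonneg_right hε1 (norm_nonneg X)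
          _ = ‖X‖ := one_mul _
        have h2 : (1 + ‖ε • X‖) ^ m0 ≤ (1 + ‖X‖) ^ m0 :=
          pow_le_pow_left₀ (by positivity) (by linarith) m0
        exact mul_le_mul_of_nonneg_left h2 hC0.le
      calc ‖b X * τ (ε • X) * ψ X‖ = ‖b X‖ * ‖τ (ε • X)‖ * ‖ψ X‖ := by
            rw [norm_mul, norm_mul]
        _ ≤ (Cb * (1 + ‖X‖) ^ mb) * (C0 * (1 + ‖X‖) ^ m0) * ‖ψ X‖ := by
            refine mul_le_mul_of_nonneg_right (mul_le_mul (hb X) hτb (norm_nonneg _) (by positivity))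
              (norm_nonneg _)
        _ = Cb * C0 * ((1 + ‖X‖) ^ (mb + m0) * ‖ψ X‖) := by rw [pow_add]; ring
  -- integrability of g n
  have hg_int : ∀ n : ℕ, Integrable (g n) := by
    intro n
    refine integrable_dom ψ ?_ (Cb * ‖iteratedFDeriv ℝ n τ 0‖) (mb + n) ?_
    · exact (hb_smooth.continuous.mul (continuous_const.mul
        ((iteratedFDeriv ℝ n τ 0).cont.comp (continuous_pi fun _ => continuous_id)))).mul
        ψ.continuous
    · intro X
      have hF : ‖iteratedFDeriv ℝ n τ 0 (fun _ => X)‖ ≤ ‖iteratedFDeriv ℝ n τ 0‖ * ‖X‖ ^ n := by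
        have := (iteratedFDeriv ℝ n τ 0).le_opNorm (fun _ => X)
        simpa [Finset.prod_const] using this
      have hfact : ‖((n.factorial : ℂ))⁻¹‖ ≤ 1 := by
        rw [norm_inv, Complex.norm_natCast]
        rw [inv_le_one_iff₀]
        right
        exact_mod_cast Nat.one_le_iff_ne_zero.mpr n.factorial_ne_zero
      calc ‖g n X‖ = ‖b X‖ * (‖((n.factorial : ℂ))⁻¹‖ * ‖iteratedFDeriv ℝ n τ 0 (fun _ => X)‖)
            * ‖ψ X‖ := by simp [hg, norm_mul]
        _ ≤ (Cb * (1 + ‖X‖) ^ mb) * (1 * (‖iteratedFDeriv ℝ n τ 0‖ * (1 + ‖X‖) ^ n)) * ‖ψ X‖ := by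
            refine mul_le_mul_of_nonneg_right (mul_le_mul (hb X) ?_ (by positivity) (by positivity))
              (norm_nonneg _)
            refine mul_le_mul hfact (hF.trans ?_) (norm_nonneg _) zero_le_one
            exact mul_le_mul_of_nonneg_left (pow_le_pow_left₀ (norm_nonneg X) (hone X) n)
              (norm_nonneg _)
        _ = Cb * ‖iteratedFDeriv ℝ n τ 0‖ * ((1 + ‖X‖) ^ (mb + n) * ‖ψ X‖) := by
            rw [pow_add]; ring
  -- rewrite the difference as a single integral
  have hgc_int : ∀ n ∈ Finset.range (N + 1),
      Integrable (fun X => ((k : ℂ) ^ n)⁻¹ * g n X) := fun n _ => (hg_int n).const_mul _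
  have hsum : (∑ n ∈ Finset.range (N + 1), ((k : ℂ) ^ n)⁻¹ * ∫ X, g n X)
      = ∫ X, ∑ n ∈ Finset.range (N + 1), ((k : ℂ) ^ n)⁻¹ * g n X := by
    rw [integral_finset_sum _ hgc_int]
    refine Finset.sum_congr rfl fun n _ => ?_
    rw [integral_const_mul]
  have hrw : (∫ X, f X) - ∑ n ∈ Finset.range (N + 1), ((k : ℂ) ^ n)⁻¹ * ∫ X, g n X
      = ∫ X, (f X - ∑ n ∈ Finset.range (N + 1), ((k : ℂ) ^ n)⁻¹ * g n X) := by
    rw [hsum, integral_sub hf_int (integrable_finset_sum _ hgc_int)]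
  -- pointwise identity and bound
  have hpt : ∀ X, f X - ∑ n ∈ Finset.range (N + 1), ((k : ℂ) ^ n)⁻¹ * g n X
      = b X * (τ (ε • X) - ∑ n ∈ Finset.range (N + 1),
          ((n.factorial : ℂ))⁻¹ * iteratedFDeriv ℝ n τ 0 (fun _ => ε • X)) * ψ X := by
    intro X
    have hterm : ∀ n : ℕ, ((k : ℂ) ^ n)⁻¹ * g n X
        = b X * (((n.factorial : ℂ))⁻¹ * iteratedFDeriv ℝ n τ 0 (fun _ => ε • X)) * ψ X := by
      intro n
      have hsm : iteratedFDeriv ℝ n τ 0 (fun _ => ε • X)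
          = (ε ^ n : ℝ) • iteratedFDeriv ℝ n τ 0 (fun _ => X) := by
        have := (iteratedFDeriv ℝ n τ 0).map_smul_univ (fun _ => ε) (fun _ => X)
        simpa [Finset.prod_const] using this
      have hcast : ((k : ℂ) ^ n)⁻¹ = ((ε ^ n : ℝ) : ℂ) := by
        rw [hε]
        push_cast
        rw [inv_pow]
      rw [hsm, hcast, hg]
      simp only [Complex.real_smul]
      ring
    simp only [hf]
    rw [Finset.sum_congr rfl fun n _ => hterm n, ← Finset.sum_mul, ← Finset.mul_sum, ← sub_mul,
      ← mul_sub]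
  have hbound : ∀ X : EuclideanSpace ℝ (Fin d),
      ‖f X - ∑ n ∈ Finset.range (N + 1), ((k : ℂ) ^ n)⁻¹ * g n X‖
      ≤ (ε ^ (N + 1) * c0) * ((1 + ‖X‖) ^ p * ‖ψ X‖) := by
    intro X
    rw [hpt X]
    have hrem : ‖τ (ε • X) - ∑ n ∈ Finset.range (N + 1),
        ((n.factorial : ℂ))⁻¹ * iteratedFDeriv ℝ n τ 0 (fun _ => ε • X)‖
        ≤ C1 * (1 + ‖X‖) ^ m1 * ‖ε • X‖ ^ (N + 1) / N.factorial := by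
      refine taylor_segment_bound τ hτ_smooth N (ε • X) _ fun t ht => ?_
      refine (h1 _).trans ?_
      have hn : ‖t • ε • X‖ ≤ ‖X‖ := by
        rw [norm_smul, norm_smul, Real.norm_eq_abs, Real.norm_eq_abs, abs_of_pos hε0]
        rcases ht with ⟨ht0, ht1⟩
        rw [abs_of_nonneg ht0]
        calc t * (ε * ‖X‖) ≤ 1 * (1 * ‖X‖) := by
              refine mul_le_mul ht1 (mul_le_mul hε1 le_rfl (norm_nonneg X) zero_le_one)
                (by positivity) zero_le_one
        _ = ‖X‖ := by ring
      exact mul_le_mul_of_nonneg_left (pow_le_pow_left₀ (by positivity) (by linarith) m1) hC1.le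
    have hεX : ‖ε • X‖ ^ (N + 1) ≤ ε ^ (N + 1) * (1 + ‖X‖) ^ (N + 1) := by
      rw [norm_smul, Real.norm_eq_abs, abs_of_pos hε0, mul_pow]
      exact mul_le_mul_of_nonneg_left (pow_le_pow_left₀ (norm_nonneg X) (hone X) _)
        (by positivity)
    calc ‖b X * _ * ψ X‖ = ‖b X‖ * ‖τ (ε • X) - ∑ n ∈ Finset.range (N + 1),
          ((n.factorial : ℂ))⁻¹ * iteratedFDeriv ℝ n τ 0 (fun _ => ε • X)‖ * ‖ψ X‖ := by
          rw [norm_mul, norm_mul]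
      _ ≤ (Cb * (1 + ‖X‖) ^ mb) *
            (C1 * (1 + ‖X‖) ^ m1 * (ε ^ (N + 1) * (1 + ‖X‖) ^ (N + 1)) / N.factorial) * ‖ψ X‖ := by
          refine mul_le_mul_of_nonneg_right (mul_le_mul (hb X) (hrem.trans ?_) (norm_nonneg _)
            (by positivity)) (norm_nonneg _)
          gcongr
      _ = (ε ^ (N + 1) * c0) * ((1 + ‖X‖) ^ p * ‖ψ X‖) := by
          rw [hc0, hp, pow_add, pow_add]; field_simp; ring
  -- conclude
  rw [hrw]
  have hInt : Integrable (fun X : EuclideanSpace ℝ (Fin d) =>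
      (ε ^ (N + 1) * c0) * ((1 + ‖X‖) ^ p * ‖ψ X‖)) :=
    (integrable_poly_schwartz ψ p).const_mul _
  calc ‖∫ X, (f X - ∑ n ∈ Finset.range (N + 1), ((k : ℂ) ^ n)⁻¹ * g n X)‖
      ≤ ∫ X : EuclideanSpace ℝ (Fin d), (ε ^ (N + 1) * c0) * ((1 + ‖X‖) ^ p * ‖ψ X‖) :=
        norm_integral_le_of_norm_le hInt (Filter.Eventually.of_forall hbound)
    _ = (ε ^ (N + 1) * c0) * I := by rw [integral_const_mul, hI]
    _ ≤ (c0 * I + 1) * ((k : ℝ) ^ (N + 1))⁻¹ := by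
        rw [← inv_pow, ← hε]
        have : ε ^ (N + 1) * c0 * I = (c0 * I) * ε ^ (N + 1) := by ring
        rw [this]
        refine mul_le_mul (by linarith) le_rfl (by positivity) (by positivity)
end

section
/- Let d, m ≥ 1, let K ⊂ ℝ^m be compact, and let τ : ℝ^m × ℝ^d → ℂ be a smooth function such that for every j ∈ ℕ there exist C_j > 0 and p_j ∈ ℕ with the norm of every iterated derivative of τ of total order j at (x,X) bounded by C_j(1+‖X‖)^{p_j} for all x ∈ K and X ∈ ℝ^d. Let b : ℝ^m × ℝ^d → ℂ be continuous with |b(x,X)| ≤ C(1+‖X‖)^{p} for all x ∈ K, X ∈ ℝ^d, for some C > 0, p ∈ ℕ, and let ψ : ℝ^d → ℂ be a Schwartz function. For n ∈ ℕ and x ∈ ℝ^m let τ_n(x,·) denote the degree-n homogeneous term of the Taylor series at X = 0 of X ↦ τ(x,X). Then for every N ∈ ℕ there exists C_N > 0 such that for every x ∈ K and every integer k ≥ 1, | ∫_{ℝ^d} b(x,X) τ(x,X/k) ψ(X) dX − Σ_{n=0}^{N} k^{-n} ∫_{ℝ^d} b(x,X) τ_n(x,X) ψ(X) dX | ≤ C_N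 k^{-(N+1)}; that is, the asymptotic expansion obtained by replacing τ(x,·) by its Taylor series at 0 holds uniformly for x in the compact set K. -/
open MeasureTheory Finset


open MeasureTheory Finset

private lemma iteratedFDeriv_comp_const_add' {E F : Type*} [NormedAddCommGroup E]
    [NormedSpace ℝ E] [NormedAddCommGroup F] [NormedSpace ℝ F]
    {f : E → F} (hf : ContDiff ℝ (⊤ : ℕ∞) f) (a : E) (n : ℕ) (x : E) :
    iteratedFDeriv ℝ n (fun z => f (a + z)) x = iteratedFDeriv ℝ n f (a + x) := by
  induction n generalizing x with
  | zero => ext m; simp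
  | succ n ih =>
    ext m
    rw [iteratedFDeriv_succ_apply_left, iteratedFDeriv_succ_apply_left]
    have hdf : DifferentiableAt ℝ (iteratedFDeriv ℝ n f) (a + x) :=
      (hf.differentiable_iteratedFDeriv (by exact_mod_cast ENat.coe_lt_top n)) _
    have h1 : HasFDerivAt (fun z : E => a + z) (ContinuousLinearMap.id ℝ E) x :=
      (hasFDerivAt_id x).const_add a
    have h2 := (hdf.hasFDerivAt).comp x h1
    rw [Function.comp_def] at h2
    have h3 : fderiv ℝ (fun z => iteratedFDeriv ℝ n f (a + z)) x
        = fderiv ℝ (iteratedFDeriv ℝ n f) (a + x) := by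
      rw [h2.fderiv, ContinuousLinearMap.comp_id]
    have h4 : (iteratedFDeriv ℝ n fun z => f (a + z))
        = fun z => iteratedFDeriv ℝ n f (a + z) := funext ih
    rw [h4, h3]

private lemma slice_bound {E F : Type*} [NormedAddCommGroup E] [NormedSpace ℝ E]
    [NormedAddCommGroup F] [NormedSpace ℝ F]
    {τ : E × F → ℂ} (hτ : ContDiff ℝ (⊤ : ℕ∞) τ) (x : E) (j : ℕ) (Z : F) :
    ‖iteratedFDeriv ℝ j (fun Y => τ (x, Y)) Z‖ ≤ ‖iteratedFDeriv ℝ j τ (x, Z)‖ := by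
  set i : F →L[ℝ] E × F := ContinuousLinearMap.inr ℝ E F with hi_def
  have hσ : ContDiff ℝ (⊤ : ℕ∞) (fun W : E × F => τ ((x, 0) + W)) :=
    hτ.comp (contDiff_const.add contDiff_id)
  have hcomp : (fun Y => τ (x, Y)) = (fun W : E × F => τ ((x, 0) + W)) ∘ i := by
    funext Y; simp [hi_def, Prod.mk_add_mk]
  have hin : ‖i‖ ≤ 1 := by
    refine ContinuousLinearMap.opNorm_le_bound _ zero_le_one fun Y => ?_
    simp [hi_def, Prod.norm_def]
  rw [hcomp, i.iteratedFDeriv_comp_right (hσ.of_le (by exact_mod_cast le_top)) Z le_rfl]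
  calc ‖(iteratedFDeriv ℝ j (fun W : E × F => τ ((x, 0) + W)) (i Z)).compContinuousLinearMap
        fun _ => i‖
      ≤ ‖iteratedFDeriv ℝ j (fun W : E × F => τ ((x, 0) + W)) (i Z)‖ * ∏ _l : Fin j, ‖i‖ :=
        ContinuousMultilinearMap.norm_compContinuousLinearMap_le _ _
    _ ≤ ‖iteratedFDeriv ℝ j τ (x, Z)‖ * 1 := by
        have he : iteratedFDeriv ℝ j (fun W : E × F => τ ((x, 0) + W)) (i Z)
            = iteratedFDeriv ℝ j τ (x, Z) := by
          rw [iteratedFDeriv_comp_const_add' hτ ((x, 0) : E × F) j (i Z)]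
          congr 1
          simp [hi_def, Prod.mk_add_mk]
        rw [he]
        exact mul_le_mul_of_nonneg_left
          (Finset.prod_le_one (fun _ _ => norm_nonneg _) (fun _ _ => hin)) (norm_nonneg _)
    _ = ‖iteratedFDeriv ℝ j τ (x, Z)‖ := mul_one _

private lemma iteratedDerivWithin_eq_global {f : ℝ → ℂ} {n : ℕ} (hf : ContDiff ℝ (⊤ : ℕ∞) f)
    {s : Set ℝ} (hs : UniqueDiffOn ℝ s) {x : ℝ} (hx : x ∈ s) :
    iteratedDerivWithin n f s x = iteratedDeriv n f x := by
  rw [iteratedDerivWithin_eq_iteratedFDerivWithin, iteratedDeriv_eq_iteratedFDeriv]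
  congr 1
  have h : HasFTaylorSeriesUpTo (n : ℕ∞) f (ftaylorSeries ℝ f) :=
    contDiff_iff_ftaylorSeries.mp (hf.of_le (by exact_mod_cast le_top))
  exact ((h.hasFTaylorSeriesUpToOn s).eq_iteratedFDerivWithin_of_uniqueDiffOn
    (by exact_mod_cast le_rfl) hs hx).symm

private lemma integrable_one_add_pow_mul (d : ℕ)
    (ψ : SchwartzMap (EuclideanSpace ℝ (Fin d)) ℂ) (Q : ℕ) :
    Integrable (fun X : EuclideanSpace ℝ (Fin d) => (1 + ‖X‖) ^ Q * ‖ψ X‖) := by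
  have h : (fun X : EuclideanSpace ℝ (Fin d) => (1 + ‖X‖) ^ Q * ‖ψ X‖)
      = fun X => ∑ i ∈ range (Q + 1), (Q.choose i : ℝ) * (‖X‖ ^ i * ‖ψ X‖) := by
    funext X
    rw [add_comm (1 : ℝ), add_pow, Finset.sum_mul]
    exact Finset.sum_congr rfl fun i _ => by ring
  rw [h]
  exact integrable_finset_sum _ fun i _ => (ψ.integrable_pow_mul volume i).const_mul _

private lemma taylor_pointwise {E F : Type*} [NormedAddCommGroup E] [NormedSpace ℝ E]
    [NormedAddCommGroup F] [NormedSpace ℝ F]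
    {τ : E × F → ℂ} (hτ : ContDiff ℝ (⊤ : ℕ∞) τ) (N : ℕ) {C1 : ℝ} (hC1 : 0 ≤ C1) {p1 : ℕ} (x : E)
    (hτb : ∀ Z : F, ‖iteratedFDeriv ℝ (N + 1) τ (x, Z)‖ ≤ C1 * (1 + ‖Z‖) ^ p1)
    {ε : ℝ} (hε : ε ∈ Set.Icc (0 : ℝ) 1) (X : F) :
    ‖τ (x, ε • X) - ∑ n ∈ range (N + 1), (((n.factorial : ℝ))⁻¹ * ε ^ n) •
        iteratedFDeriv ℝ n (fun Y => τ (x, Y)) 0 (fun _ => X)‖ ≤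
      (C1 * (1 + ‖X‖) ^ p1 * ‖X‖ ^ (N + 1) / (N.factorial)) * ε ^ (N + 1) := by
  have hgx : ContDiff ℝ (⊤ : ℕ∞) (fun Y => τ (x, Y)) := hτ.comp (contDiff_const.prodMk contDiff_id)
  set gx : F → ℂ := fun Y => τ (x, Y) with hgx_def
  set L : ℝ →L[ℝ] F := ContinuousLinearMap.toSpanSingleton ℝ X with hL_def
  have hFc : ContDiff ℝ (⊤ : ℕ∞) (gx ∘ L) := hgx.comp L.contDiff
  have hderiv : ∀ (n : ℕ) (t : ℝ), iteratedDeriv n (gx ∘ L) t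
      = iteratedFDeriv ℝ n gx (t • X) (fun _ => X) := by
    intro n t
    rw [iteratedDeriv_eq_iteratedFDeriv,
      L.iteratedFDeriv_comp_right (hgx.of_le (by exact_mod_cast le_top)) t le_rfl]
    simp [ContinuousMultilinearMap.compContinuousLinearMap_apply, hL_def,
      ContinuousLinearMap.toSpanSingleton_apply]
  have hXn : ‖X‖ ≤ 1 + ‖X‖ := by linarith [norm_nonneg X]
  have hbound' : ∀ y ∈ Set.Icc (0 : ℝ) 1,
      ‖iteratedDerivWithin (N + 1) (gx ∘ L) (Set.Icc 0 1) y‖ ≤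
        C1 * (1 + ‖X‖) ^ p1 * ‖X‖ ^ (N + 1) := by
    intro y hy
    rw [iteratedDerivWithin_eq_global hFc (uniqueDiffOn_Icc one_pos) hy, hderiv]
    calc ‖iteratedFDeriv ℝ (N + 1) gx (y • X) (fun _ => X)‖
        ≤ ‖iteratedFDeriv ℝ (N + 1) gx (y • X)‖ * ‖X‖ ^ (N + 1) := by
          simpa using
            ContinuousMultilinearMap.le_opNorm (iteratedFDeriv ℝ (N + 1) gx (y • X))
              (fun _ => X)
      _ ≤ (C1 * (1 + ‖X‖) ^ p1) * ‖X‖ ^ (N + 1) := by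
          refine mul_le_mul_of_nonneg_right ?_ (by positivity)
          refine (slice_bound hτ x (N + 1) (y • X)).trans ((hτb (y • X)).trans ?_)
          have hyX : ‖y • X‖ ≤ ‖X‖ := by
            rw [norm_smul, Real.norm_eq_abs, abs_of_nonneg hy.1]
            nlinarith [norm_nonneg X, hy.2]
          gcongr
  have taylor := taylor_mean_remainder_bound zero_le_one
    ((hFc.of_le (by exact_mod_cast le_top)).contDiffOn :
      ContDiffOn ℝ (N + 1 : ℕ) (gx ∘ L) (Set.Icc 0 1)) hε hbound'
  have hTE : taylorWithinEval (gx ∘ L) N (Set.Icc 0 1) 0 ε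
      = ∑ n ∈ range (N + 1), (((n.factorial : ℝ))⁻¹ * ε ^ n) •
          iteratedFDeriv ℝ n gx 0 (fun _ => X) := by
    rw [taylor_within_apply]
    refine Finset.sum_congr rfl fun n _ => ?_
    rw [iteratedDerivWithin_eq_global hFc (uniqueDiffOn_Icc one_pos)
      (Set.left_mem_Icc.mpr zero_le_one), hderiv]
    norm_num
  have hval : (gx ∘ L) ε = τ (x, ε • X) := by
    simp [hgx_def, hL_def, ContinuousLinearMap.toSpanSingleton_apply, Function.comp]
  rw [hval, hTE] at taylor
  calc ‖τ (x, ε • X) - ∑ n ∈ range (N + 1), (((n.factorial : ℝ))⁻¹ * ε ^ n) •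
        iteratedFDeriv ℝ n gx 0 (fun _ => X)‖
      ≤ C1 * (1 + ‖X‖) ^ p1 * ‖X‖ ^ (N + 1) * (ε - 0) ^ (N + 1) / N.factorial := taylor
    _ = (C1 * (1 + ‖X‖) ^ p1 * ‖X‖ ^ (N + 1) / (N.factorial)) * ε ^ (N + 1) := by
        ring

/-- uniform-in-parameters version of the asymptotic expansion of
`∫ b(x,X) τ(x,X/k) ψ(X) dX` obtained by replacing `τ(x,·)` by its Taylor series
at the origin, uniformly for `x` in a compact set `K`. -/
theorem stmt_1 (d m : ℕ) (hd : 1 ≤ d) (hm : 1 ≤ m)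
    (K : Set (EuclideanSpace ℝ (Fin m))) (hK : IsCompact K)
    (τ : EuclideanSpace ℝ (Fin m) × EuclideanSpace ℝ (Fin d) → ℂ)
    (hτ_smooth : ContDiff ℝ (⊤ : ℕ∞) τ)
    (hτ_growth : ∀ j : ℕ, ∃ C : ℝ, 0 < C ∧ ∃ p : ℕ, ∀ x ∈ K, ∀ X,
        ‖iteratedFDeriv ℝ j τ (x, X)‖ ≤ C * (1 + ‖X‖) ^ p)
    (b : EuclideanSpace ℝ (Fin m) × EuclideanSpace ℝ (Fin d) → ℂ)
    (hb_cont : Continuous b)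
    (hb_growth : ∃ C : ℝ, 0 < C ∧ ∃ p : ℕ, ∀ x ∈ K, ∀ X,
        ‖b (x, X)‖ ≤ C * (1 + ‖X‖) ^ p)
    (ψ : SchwartzMap (EuclideanSpace ℝ (Fin d)) ℂ)
    (N : ℕ) :
    ∃ C : ℝ, 0 < C ∧ ∀ x ∈ K, ∀ k : ℕ, 1 ≤ k →
      ‖(∫ X, b (x, X) * τ (x, (k : ℝ)⁻¹ • X) * ψ X) -
        ∑ n ∈ Finset.range (N + 1), ((k : ℂ) ^ n)⁻¹ *
          ∫ X, b (x, X) * ((n.factorial : ℂ)⁻¹ *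
            iteratedFDeriv ℝ n (fun Y => τ (x, Y)) 0 (fun _ => X)) * ψ X‖ ≤
      C * ((k : ℝ) ^ (N + 1))⁻¹ := by
  classical
  obtain ⟨Cb, hCb, pb, hbound⟩ := hb_growth
  obtain ⟨C1, hC1, p1, hτb⟩ := hτ_growth (N + 1)
  obtain ⟨C0, hC0, p0, hτ0⟩ := hτ_growth 0
  have hzero : ∀ n : ℕ, ∃ Dn : ℝ, 0 < Dn ∧ ∀ x ∈ K, ∀ X : EuclideanSpace ℝ (Fin d),
      ‖iteratedFDeriv ℝ n (fun Y => τ (x, Y)) 0 (fun _ => X)‖ ≤ Dn * ‖X‖ ^ n := by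
    intro n
    obtain ⟨C2, hC2, p2, h2⟩ := hτ_growth n
    refine ⟨C2, hC2, fun x hx X => ?_⟩
    have h3 : ‖iteratedFDeriv ℝ n (fun Y => τ (x, Y)) (0 : EuclideanSpace ℝ (Fin d))‖ ≤ C2 := by
      refine (slice_bound hτ_smooth x n 0).trans ?_
      simpa using h2 x hx 0
    calc ‖iteratedFDeriv ℝ n (fun Y => τ (x, Y)) 0 (fun _ => X)‖
        ≤ ‖iteratedFDeriv ℝ n (fun Y => τ (x, Y)) (0 : EuclideanSpace ℝ (Fin d))‖ * ‖X‖ ^ n := by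
          simpa using ContinuousMultilinearMap.le_opNorm
            (iteratedFDeriv ℝ n (fun Y => τ (x, Y)) 0) (fun _ => X)
      _ ≤ C2 * ‖X‖ ^ n := mul_le_mul_of_nonneg_right h3 (by positivity)
  set Q : ℕ := pb + p1 + (N + 1) with hQ
  set I : ℝ := ∫ X : EuclideanSpace ℝ (Fin d), (1 + ‖X‖) ^ Q * ‖ψ X‖ with hI
  have hI0 : 0 ≤ I := integral_nonneg fun X => by positivity
  set A : ℝ := Cb * C1 / N.factorial with hA
  have hA0 : 0 ≤ A := by positivity
  refine ⟨A * I + 1, by positivity, fun x hx k hk => ?_⟩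
  set ε : ℝ := (k : ℝ)⁻¹ with hε_def
  have hk1 : (1 : ℝ) ≤ (k : ℝ) := by exact_mod_cast hk
  have hk0 : (0 : ℝ) < (k : ℝ) := by linarith
  have hε_mem : ε ∈ Set.Icc (0 : ℝ) 1 := by
    constructor
    · positivity
    · rw [hε_def]
      exact inv_le_one_of_one_le₀ hk1
  have hεX : ∀ X : EuclideanSpace ℝ (Fin d), ‖ε • X‖ ≤ ‖X‖ := by
    intro X
    rw [norm_smul, Real.norm_eq_abs, abs_of_nonneg hε_mem.1]
    nlinarith [norm_nonneg X, hε_mem.2]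
  -- integrability of the main integrand
  have hint1 : Integrable
      (fun X : EuclideanSpace ℝ (Fin d) => b (x, X) * τ (x, ε • X) * ψ X) := by
    refine ((integrable_one_add_pow_mul d ψ (pb + p0)).const_mul (Cb * C0)).mono' ?_ ?_
    · exact (((hb_cont.comp (continuous_const.prodMk continuous_id)).mul
        (hτ_smooth.continuous.comp
          (continuous_const.prodMk (continuous_id.const_smul ε)))).mul
        ψ.continuous).aestronglyMeasurable
    · refine Filter.Eventually.of_forall fun X => ?_
      have hb1 : ‖b (x, X)‖ ≤ Cb * (1 + ‖X‖) ^ pb := hbound x hx X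
      have hτ1 : ‖τ (x, ε • X)‖ ≤ C0 * (1 + ‖X‖) ^ p0 := by
        have h := hτ0 x hx (ε • X)
        rw [norm_iteratedFDeriv_zero] at h
        refine h.trans (mul_le_mul_of_nonneg_left
          (pow_le_pow_left₀ (by positivity) (by linarith [hεX X]) p0) hC0.le)
      calc ‖b (x, X) * τ (x, ε • X) * ψ X‖
          = ‖b (x, X)‖ * ‖τ (x, ε • X)‖ * ‖ψ X‖ := by rw [norm_mul, norm_mul]
        _ ≤ (Cb * (1 + ‖X‖) ^ pb) * (C0 * (1 + ‖X‖) ^ p0) * ‖ψ X‖ := by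
            gcongr <;> positivity
        _ = Cb * C0 * ((1 + ‖X‖) ^ (pb + p0) * ‖ψ X‖) := by rw [pow_add]; ring
  -- integrability of the Taylor-term integrands
  have hint2 : ∀ n : ℕ, Integrable (fun X : EuclideanSpace ℝ (Fin d) =>
      b (x, X) * ((n.factorial : ℂ)⁻¹ *
        iteratedFDeriv ℝ n (fun Y => τ (x, Y)) 0 (fun _ => X)) * ψ X) := by
    intro n
    obtain ⟨Dn, hDn, hDb⟩ := hzero n
    refine ((integrable_one_add_pow_mul d ψ (pb + n)).const_mul (Cb * Dn)).mono' ?_ ?_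
    · refine (((hb_cont.comp (continuous_const.prodMk continuous_id)).mul
        (continuous_const.mul ?_)).mul ψ.continuous).aestronglyMeasurable
      exact (iteratedFDeriv ℝ n (fun Y => τ (x, Y)) 0).cont.comp
        (continuous_pi fun _ => continuous_id)
    · refine Filter.Eventually.of_forall fun X => ?_
      have hfac : ‖((n.factorial : ℂ))⁻¹‖ ≤ 1 := by
        rw [norm_inv, Complex.norm_natCast]
        rw [inv_le_one_iff₀]
        right
        exact Nat.one_le_cast.mpr n.factorial_pos
      have hXb : ‖X‖ ^ n ≤ (1 + ‖X‖) ^ n :=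
        pow_le_pow_left₀ (norm_nonneg X) (by linarith [norm_nonneg X]) n
      calc ‖b (x, X) * ((n.factorial : ℂ)⁻¹ *
            iteratedFDeriv ℝ n (fun Y => τ (x, Y)) 0 (fun _ => X)) * ψ X‖
          = ‖b (x, X)‖ * (‖((n.factorial : ℂ))⁻¹‖ *
            ‖iteratedFDeriv ℝ n (fun Y => τ (x, Y)) 0 (fun _ => X)‖) * ‖ψ X‖ := by
            rw [norm_mul, norm_mul, norm_mul]
        _ ≤ (Cb * (1 + ‖X‖) ^ pb) * (1 * (Dn * ‖X‖ ^ n)) * ‖ψ X‖ := by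
            gcongr
            · exact hbound x hx X
            · exact hDb x hx X
        _ ≤ (Cb * (1 + ‖X‖) ^ pb) * (1 * (Dn * (1 + ‖X‖) ^ n)) * ‖ψ X‖ := by
            gcongr
        _ = Cb * Dn * ((1 + ‖X‖) ^ (pb + n) * ‖ψ X‖) := by rw [pow_add]; ring
  have hintsum : Integrable (fun X : EuclideanSpace ℝ (Fin d) =>
      ∑ n ∈ Finset.range (N + 1), ((k : ℂ) ^ n)⁻¹ *
        (b (x, X) * ((n.factorial : ℂ)⁻¹ *
          iteratedFDeriv ℝ n (fun Y => τ (x, Y)) 0 (fun _ => X)) * ψ X)) :=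
    integrable_finset_sum _ fun n _ => (hint2 n).const_mul _
  have step1 : ∑ n ∈ Finset.range (N + 1), ((k : ℂ) ^ n)⁻¹ *
        ∫ X, b (x, X) * ((n.factorial : ℂ)⁻¹ *
          iteratedFDeriv ℝ n (fun Y => τ (x, Y)) 0 (fun _ => X)) * ψ X
      = ∫ X, ∑ n ∈ Finset.range (N + 1), ((k : ℂ) ^ n)⁻¹ *
          (b (x, X) * ((n.factorial : ℂ)⁻¹ *
            iteratedFDeriv ℝ n (fun Y => τ (x, Y)) 0 (fun _ => X)) * ψ X) := by
    rw [integral_finset_sum _ fun n _ => (hint2 n).const_mul _]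
    exact Finset.sum_congr rfl fun n _ => (integral_const_mul _ _).symm
  rw [step1, ← integral_sub hint1 hintsum]
  -- pointwise bound
  have hptwise : ∀ X : EuclideanSpace ℝ (Fin d),
      ‖b (x, X) * τ (x, ε • X) * ψ X - ∑ n ∈ Finset.range (N + 1), ((k : ℂ) ^ n)⁻¹ *
          (b (x, X) * ((n.factorial : ℂ)⁻¹ *
            iteratedFDeriv ℝ n (fun Y => τ (x, Y)) 0 (fun _ => X)) * ψ X)‖
        ≤ ε ^ (N + 1) * A * ((1 + ‖X‖) ^ Q * ‖ψ X‖) := by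
    intro X
    have hfacX : b (x, X) * τ (x, ε • X) * ψ X - ∑ n ∈ Finset.range (N + 1), ((k : ℂ) ^ n)⁻¹ *
          (b (x, X) * ((n.factorial : ℂ)⁻¹ *
            iteratedFDeriv ℝ n (fun Y => τ (x, Y)) 0 (fun _ => X)) * ψ X)
        = b (x, X) * (τ (x, ε • X) - ∑ n ∈ Finset.range (N + 1),
            (((n.factorial : ℝ))⁻¹ * ε ^ n) •
              iteratedFDeriv ℝ n (fun Y => τ (x, Y)) 0 (fun _ => X)) * ψ X := by
      rw [mul_sub, sub_mul, Finset.mul_sum, Finset.sum_mul]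
      congr 1
      refine Finset.sum_congr rfl fun n _ => ?_
      rw [Complex.real_smul]
      simp only [hε_def]
      push_cast
      ring
    rw [hfacX]
    have hkey := taylor_pointwise hτ_smooth N hC1.le x (fun Z => hτb x hx Z) hε_mem X
    have hXb : ‖X‖ ^ (N + 1) ≤ (1 + ‖X‖) ^ (N + 1) :=
      pow_le_pow_left₀ (norm_nonneg X) (by linarith [norm_nonneg X]) _
    calc ‖b (x, X) * (τ (x, ε • X) - ∑ n ∈ Finset.range (N + 1),
            (((n.factorial : ℝ))⁻¹ * ε ^ n) •
              iteratedFDeriv ℝ n (fun Y => τ (x, Y)) 0 (fun _ => X)) * ψ X‖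
        = ‖b (x, X)‖ * ‖τ (x, ε • X) - ∑ n ∈ Finset.range (N + 1),
            (((n.factorial : ℝ))⁻¹ * ε ^ n) •
              iteratedFDeriv ℝ n (fun Y => τ (x, Y)) 0 (fun _ => X)‖ * ‖ψ X‖ := by
          rw [norm_mul, norm_mul]
      _ ≤ (Cb * (1 + ‖X‖) ^ pb) *
            ((C1 * (1 + ‖X‖) ^ p1 * ‖X‖ ^ (N + 1) / (N.factorial)) * ε ^ (N + 1)) * ‖ψ X‖ := by
          exact mul_le_mul_of_nonneg_right
            (mul_le_mul (hbound x hx X) hkey (norm_nonneg _) (by positivity)) (norm_nonneg _)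
      _ ≤ (Cb * (1 + ‖X‖) ^ pb) *
            ((C1 * (1 + ‖X‖) ^ p1 * (1 + ‖X‖) ^ (N + 1) / (N.factorial)) * ε ^ (N + 1)) *
            ‖ψ X‖ := by
          gcongr
      _ = ε ^ (N + 1) * A * ((1 + ‖X‖) ^ Q * ‖ψ X‖) := by
          rw [hQ, hA, pow_add, pow_add]
          field_simp
          ring
  have hnorm := norm_integral_le_of_norm_le
    ((integrable_one_add_pow_mul d ψ Q).const_mul (ε ^ (N + 1) * A))
    (Filter.Eventually.of_forall hptwise)
  refine hnorm.trans ?_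
  rw [integral_const_mul]
  have hεpow : ε ^ (N + 1) = ((k : ℝ) ^ (N + 1))⁻¹ := by rw [hε_def, inv_pow]
  rw [hεpow, ← hI]
  have ht0 : (0 : ℝ) ≤ ((k : ℝ) ^ (N + 1))⁻¹ := by positivity
  nlinarith [mul_nonneg hA0 hI0]
end

section
/- Let d ≥ 1 and N ∈ ℕ. Let u : ℝ^d → ℂ be a smooth function such that u and all its iterated derivatives have at most polynomial growth, and assume that all iterated derivatives of u of order ≤ N vanish at the origin (i.e. u vanishes at order N at X = 0). Let ψ : ℝ^d → ℂ be a Schwartz function. Then for every R ∈ ℕ there exists a constant c_R > 0 such that for all ξ ∈ ℝ^d and all integers k ≥ 1, | ∫_{ℝ^d} u(X/k) e^{i⟨ξ,X⟩} ψ(X) dX | ≤ (1/k^{N+1}) · c_R / (1+‖ξ‖²)^{R}. -/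
open MeasureTheory Finset

open scoped FourierTransform RealInnerProductSpace ContDiff Real


private theorem aux_taylor {d N : ℕ} {u : EuclideanSpace ℝ (Fin d) → ℂ}
    (hu_smooth : ContDiff ℝ (⊤ : ℕ∞) u)
    (hu_growth : ∀ n : ℕ, ∃ C : ℝ, 0 < C ∧ ∃ m : ℕ, ∀ X,
        ‖iteratedFDeriv ℝ n u X‖ ≤ C * (1 + ‖X‖) ^ m)
    (hu_vanish : ∀ j ≤ N, iteratedFDeriv ℝ j u 0 = 0) :
    ∀ i : ℕ, i ≤ N + 1 → ∃ C : ℝ, 0 < C ∧ ∃ m : ℕ, ∀ Y,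
      ‖iteratedFDeriv ℝ (N + 1 - i) u Y‖ ≤ C * ‖Y‖ ^ i * (1 + ‖Y‖) ^ m := by
  intro i
  induction i with
  | zero =>
    intro _
    obtain ⟨C, hC, m, hm⟩ := hu_growth (N + 1)
    exact ⟨C, hC, m, fun Y => by simpa using hm Y⟩
  | succ i ih =>
    intro hi
    obtain ⟨C, hC, m, hm⟩ := ih (by omega)
    refine ⟨C, hC, m, fun Y => ?_⟩
    have hj : N + 1 - i = (N + 1 - (i + 1)) + 1 := by omega
    rw [hj] at hm
    set j := N + 1 - (i + 1) with hjdef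
    have hf0 : iteratedFDeriv ℝ j u 0 = 0 := hu_vanish j (by omega)
    have hdiff : Differentiable ℝ (iteratedFDeriv ℝ j u) :=
      hu_smooth.differentiable_iteratedFDeriv (by exact_mod_cast ENat.coe_lt_top j)
    have key : ‖iteratedFDeriv ℝ j u Y - iteratedFDeriv ℝ j u 0‖ ≤
        (C * ‖Y‖ ^ i * (1 + ‖Y‖) ^ m) * ‖Y - 0‖ := by
      refine (convex_closedBall (0 : EuclideanSpace ℝ (Fin d)) ‖Y‖).norm_image_sub_le_of_norm_fderiv_le
        (fun x _ => (hdiff x)) (fun x hx => ?_) ?_ ?_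
      · rw [norm_fderiv_iteratedFDeriv]
        have hxY : ‖x‖ ≤ ‖Y‖ := by simpa [dist_eq_norm] using hx
        refine (hm x).trans ?_
        gcongr <;> linarith [norm_nonneg Y]
      · simpa using norm_nonneg Y
      · simpa using le_refl ‖Y‖
    rw [hf0, sub_zero, sub_zero] at key
    calc ‖iteratedFDeriv ℝ j u Y‖ ≤ (C * ‖Y‖ ^ i * (1 + ‖Y‖) ^ m) * ‖Y‖ := key
      _ = C * ‖Y‖ ^ (i + 1) * (1 + ‖Y‖) ^ m := by ring


private theorem aux_comp {d : ℕ} {u : EuclideanSpace ℝ (Fin d) → ℂ}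
    (hu_smooth : ContDiff ℝ (⊤ : ℕ∞) u) {r : ℝ} (hr : 0 ≤ r) (i : ℕ)
    (X : EuclideanSpace ℝ (Fin d)) :
    ‖iteratedFDeriv ℝ i (fun Y => u (r • Y)) X‖ ≤
      r ^ i * ‖iteratedFDeriv ℝ i u (r • X)‖ := by
  set L : EuclideanSpace ℝ (Fin d) →L[ℝ] EuclideanSpace ℝ (Fin d) :=
    r • ContinuousLinearMap.id ℝ (EuclideanSpace ℝ (Fin d)) with hL
  have hfun : (fun Y => u (r • Y)) = u ∘ L := rfl
  rw [hfun, L.iteratedFDeriv_comp_right hu_smooth X (by exact_mod_cast le_top)]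
  refine (ContinuousMultilinearMap.norm_compContinuousLinearMap_le _ _).trans ?_
  have hLn : ‖L‖ ≤ r := by
    refine (ContinuousLinearMap.opNorm_smul_le r _).trans ?_
    rw [Real.norm_eq_abs, abs_of_nonneg hr]
    calc r * ‖ContinuousLinearMap.id ℝ (EuclideanSpace ℝ (Fin d))‖ ≤ r * 1 := by
          gcongr; exact ContinuousLinearMap.norm_id_le
      _ = r := mul_one r
  have hprod : (∏ _j : Fin i, ‖L‖) = ‖L‖ ^ i := by
    rw [Finset.prod_const, Finset.card_univ, Fintype.card_fin]
  rw [hprod]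
  have h3 : (L X) = r • X := rfl
  rw [h3]
  calc ‖iteratedFDeriv ℝ i u (r • X)‖ * ‖L‖ ^ i
      ≤ ‖iteratedFDeriv ℝ i u (r • X)‖ * r ^ i := by gcongr
    _ = r ^ i * ‖iteratedFDeriv ℝ i u (r • X)‖ := mul_comm _ _

private theorem aux_B1 {d N : ℕ} {u : EuclideanSpace ℝ (Fin d) → ℂ}
    (hu_smooth : ContDiff ℝ (⊤ : ℕ∞) u)
    (hu_vanish : ∀ j ≤ N, iteratedFDeriv ℝ j u 0 = 0)
    (hu_growth : ∀ n : ℕ, ∃ C : ℝ, 0 < C ∧ ∃ m : ℕ, ∀ X,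
        ‖iteratedFDeriv ℝ n u X‖ ≤ C * (1 + ‖X‖) ^ m) :
    ∀ i : ℕ, ∃ C : ℝ, 0 < C ∧ ∃ m : ℕ, ∀ k : ℕ, 1 ≤ k → ∀ X,
      ‖iteratedFDeriv ℝ i (fun Y => u ((k : ℝ)⁻¹ • Y)) X‖ ≤
        ((k : ℝ) ^ (N + 1))⁻¹ * (C * (1 + ‖X‖) ^ m) := by
  intro i
  by_cases hi : i ≤ N + 1
  · obtain ⟨C, hC, m, hm⟩ := aux_taylor hu_smooth hu_growth hu_vanish (N + 1 - i) (by omega)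
    have hEq : N + 1 - (N + 1 - i) = i := by omega
    rw [hEq] at hm
    refine ⟨C, hC, (N + 1 - i) + m, fun k hk X => ?_⟩
    have hk1 : (1 : ℝ) ≤ (k : ℝ) := by exact_mod_cast hk
    have hk0 : (0 : ℝ) < (k : ℝ) := by linarith
    have hr0 : (0 : ℝ) ≤ (k : ℝ)⁻¹ := by positivity
    have hr1 : (k : ℝ)⁻¹ ≤ 1 := by
      rw [inv_le_one_iff₀]; right; exact hk1
    set r := (k : ℝ)⁻¹ with hrdef
    have hrX : ‖r • X‖ = r * ‖X‖ := by
      rw [norm_smul, Real.norm_eq_abs, abs_of_nonneg hr0]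
    have hrt : r * ‖X‖ ≤ ‖X‖ := by
      nlinarith [norm_nonneg X]
    have hiN : i + (N + 1 - i) = N + 1 := by omega
    calc ‖iteratedFDeriv ℝ i (fun Y => u (r • Y)) X‖
        ≤ r ^ i * ‖iteratedFDeriv ℝ i u (r • X)‖ := aux_comp hu_smooth hr0 i X
      _ ≤ r ^ i * (C * ‖r • X‖ ^ (N + 1 - i) * (1 + ‖r • X‖) ^ m) := by
          gcongr; exact hm _
      _ = C * (r ^ i * (r ^ (N + 1 - i) * ‖X‖ ^ (N + 1 - i))) * (1 + r * ‖X‖) ^ m := by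
          rw [hrX, mul_pow]; ring
      _ = C * r ^ (N + 1) * (‖X‖ ^ (N + 1 - i) * (1 + r * ‖X‖) ^ m) := by
          rw [← mul_assoc (r ^ i), ← pow_add, hiN]; ring
      _ ≤ C * r ^ (N + 1) * ((1 + ‖X‖) ^ (N + 1 - i) * (1 + ‖X‖) ^ m) := by
          gcongr <;> linarith [norm_nonneg X]
      _ = ((k : ℝ) ^ (N + 1))⁻¹ * (C * (1 + ‖X‖) ^ ((N + 1 - i) + m)) := by
          rw [pow_add, hrdef, inv_pow]; ring
  · obtain ⟨C, hC, m, hm⟩ := hu_growth i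
    refine ⟨C, hC, m, fun k hk X => ?_⟩
    have hk1 : (1 : ℝ) ≤ (k : ℝ) := by exact_mod_cast hk
    have hr0 : (0 : ℝ) ≤ (k : ℝ)⁻¹ := by positivity
    have hr1 : (k : ℝ)⁻¹ ≤ 1 := by rw [inv_le_one_iff₀]; right; exact hk1
    set r := (k : ℝ)⁻¹ with hrdef
    have hrX : ‖r • X‖ = r * ‖X‖ := by
      rw [norm_smul, Real.norm_eq_abs, abs_of_nonneg hr0]
    have hrt : r * ‖X‖ ≤ ‖X‖ := by nlinarith [norm_nonneg X]
    calc ‖iteratedFDeriv ℝ i (fun Y => u (r • Y)) X‖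
        ≤ r ^ i * ‖iteratedFDeriv ℝ i u (r • X)‖ := aux_comp hu_smooth hr0 i X
      _ ≤ r ^ i * (C * (1 + ‖r • X‖) ^ m) := by gcongr; exact hm _
      _ ≤ r ^ i * (C * (1 + ‖X‖) ^ m) := by
          rw [hrX]
          gcongr <;> linarith [norm_nonneg X]
      _ ≤ r ^ (N + 1) * (C * (1 + ‖X‖) ^ m) := by
          refine mul_le_mul_of_nonneg_right
            (pow_le_pow_of_le_one hr0 hr1 (by omega)) (by positivity)
      _ = ((k : ℝ) ^ (N + 1))⁻¹ * (C * (1 + ‖X‖) ^ m) := by rw [hrdef, inv_pow]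

private theorem aux_B {d N : ℕ} {u : EuclideanSpace ℝ (Fin d) → ℂ}
    (hu_smooth : ContDiff ℝ (⊤ : ℕ∞) u)
    (ψ : SchwartzMap (EuclideanSpace ℝ (Fin d)) ℂ)
    (hB1 : ∀ i : ℕ, ∃ C : ℝ, 0 < C ∧ ∃ m : ℕ, ∀ k : ℕ, 1 ≤ k → ∀ X,
      ‖iteratedFDeriv ℝ i (fun Y => u ((k : ℝ)⁻¹ • Y)) X‖ ≤
        ((k : ℝ) ^ (N + 1))⁻¹ * (C * (1 + ‖X‖) ^ m)) :
    ∀ ℓ n : ℕ, ∃ C : ℝ, 0 < C ∧ ∀ k : ℕ, 1 ≤ k → ∀ X,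
      ‖X‖ ^ ℓ * ‖iteratedFDeriv ℝ n (fun Y => u ((k : ℝ)⁻¹ • Y) * ψ Y) X‖ ≤
        ((k : ℝ) ^ (N + 1))⁻¹ * C := by
  choose C1 hC1pos m1 hC1 using hB1
  intro ℓ n
  set S : ℕ → ℝ := fun i =>
    2 ^ (ℓ + m1 i) * ((Finset.Iic (ℓ + m1 i, n)).sup
      (fun m => SchwartzMap.seminorm ℝ m.1 m.2) ψ) with hS
  have hS0 : ∀ i, 0 ≤ S i := by
    intro i
    apply mul_nonneg (by positivity)
    exact apply_nonneg _ _
  refine ⟨1 + ∑ i ∈ Finset.range (n + 1), (n.choose i : ℝ) * (C1 i * S i), by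
    have : 0 ≤ ∑ i ∈ Finset.range (n + 1), (n.choose i : ℝ) * (C1 i * S i) := by
      apply Finset.sum_nonneg
      intro i _
      exact mul_nonneg (by positivity) (mul_nonneg (hC1pos i).le (hS0 i))
    linarith, fun k hk X => ?_⟩
  have hk1 : (1 : ℝ) ≤ (k : ℝ) := by exact_mod_cast hk
  have hkinv : (0:ℝ) ≤ ((k : ℝ) ^ (N + 1))⁻¹ := by positivity
  have hmul : ‖iteratedFDeriv ℝ n (fun Y => u ((k : ℝ)⁻¹ • Y) * ψ Y) X‖ ≤
      ∑ i ∈ Finset.range (n + 1), (n.choose i : ℝ) *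
        ‖iteratedFDeriv ℝ i (fun Y => u ((k : ℝ)⁻¹ • Y)) X‖ *
        ‖iteratedFDeriv ℝ (n - i) (⇑ψ) X‖ :=
    norm_iteratedFDeriv_mul_le
      ((hu_smooth.of_le (by simp)).comp (contDiff_id.const_smul _)) ψ.smooth' X (mod_cast le_top)
  calc ‖X‖ ^ ℓ * ‖iteratedFDeriv ℝ n (fun Y => u ((k : ℝ)⁻¹ • Y) * ψ Y) X‖
      ≤ ‖X‖ ^ ℓ * ∑ i ∈ Finset.range (n + 1), (n.choose i : ℝ) *
          ‖iteratedFDeriv ℝ i (fun Y => u ((k : ℝ)⁻¹ • Y)) X‖ *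
          ‖iteratedFDeriv ℝ (n - i) (⇑ψ) X‖ := by
        exact mul_le_mul_of_nonneg_left hmul (by positivity)
    _ = ∑ i ∈ Finset.range (n + 1), ‖X‖ ^ ℓ * ((n.choose i : ℝ) *
          ‖iteratedFDeriv ℝ i (fun Y => u ((k : ℝ)⁻¹ • Y)) X‖ *
          ‖iteratedFDeriv ℝ (n - i) (⇑ψ) X‖) := by
        rw [Finset.mul_sum]
    _ ≤ ∑ i ∈ Finset.range (n + 1), (n.choose i : ℝ) *
          (((k : ℝ) ^ (N + 1))⁻¹ * (C1 i * S i)) := by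
        apply Finset.sum_le_sum
        intro i _
        have hone := SchwartzMap.one_add_le_sup_seminorm_apply (𝕜 := ℝ)
          (m := (ℓ + m1 i, n)) (k := ℓ + m1 i) (n := n - i) le_rfl (Nat.sub_le n i) ψ X
        have hXl : ‖X‖ ^ ℓ ≤ (1 + ‖X‖) ^ ℓ :=
          pow_le_pow_left₀ (norm_nonneg X) (by linarith [norm_nonneg X]) ℓ
        calc ‖X‖ ^ ℓ * ((n.choose i : ℝ) *
              ‖iteratedFDeriv ℝ i (fun Y => u ((k : ℝ)⁻¹ • Y)) X‖ *
              ‖iteratedFDeriv ℝ (n - i) (⇑ψ) X‖)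
            = (n.choose i : ℝ) * ‖iteratedFDeriv ℝ i (fun Y => u ((k : ℝ)⁻¹ • Y)) X‖ *
              (‖X‖ ^ ℓ * ‖iteratedFDeriv ℝ (n - i) (⇑ψ) X‖) := by ring
          _ ≤ (n.choose i : ℝ) * (((k : ℝ) ^ (N + 1))⁻¹ * (C1 i * (1 + ‖X‖) ^ m1 i)) *
              ((1 + ‖X‖) ^ ℓ * ‖iteratedFDeriv ℝ (n - i) (⇑ψ) X‖) := by
              gcongr <;> first
                | exact hC1 i k hk X
                | positivity
                | exact mul_nonneg (by positivity)
                    (mul_nonneg hkinv (mul_nonneg (hC1pos i).le (by positivity)))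
          _ = (n.choose i : ℝ) * ((k : ℝ) ^ (N + 1))⁻¹ * C1 i *
              ((1 + ‖X‖) ^ (ℓ + m1 i) * ‖iteratedFDeriv ℝ (n - i) (⇑ψ) X‖) := by
              rw [pow_add]; ring
          _ ≤ (n.choose i : ℝ) * ((k : ℝ) ^ (N + 1))⁻¹ * C1 i * S i := by
              refine mul_le_mul_of_nonneg_left (le_trans ?_ (le_of_eq rfl))
                (mul_nonneg (mul_nonneg (by positivity) hkinv) (hC1pos i).le)
              exact hone
          _ = (n.choose i : ℝ) * (((k : ℝ) ^ (N + 1))⁻¹ * (C1 i * S i)) := by ring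
    _ = ((k : ℝ) ^ (N + 1))⁻¹ *
          ∑ i ∈ Finset.range (n + 1), (n.choose i : ℝ) * (C1 i * S i) := by
        rw [Finset.mul_sum]; apply Finset.sum_congr rfl; intro i _; ring
    _ ≤ ((k : ℝ) ^ (N + 1))⁻¹ *
          (1 + ∑ i ∈ Finset.range (n + 1), (n.choose i : ℝ) * (C1 i * S i)) := by
        apply mul_le_mul_of_nonneg_left (by linarith) hkinv

private theorem aux_final {d N : ℕ} {u : EuclideanSpace ℝ (Fin d) → ℂ}
    (hu_smooth : ContDiff ℝ (⊤ : ℕ∞) u)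
    (ψ : SchwartzMap (EuclideanSpace ℝ (Fin d)) ℂ)
    (R : ℕ)
    (hB : ∀ ℓ n : ℕ, ∃ C : ℝ, 0 < C ∧ ∀ k : ℕ, 1 ≤ k → ∀ X,
      ‖X‖ ^ ℓ * ‖iteratedFDeriv ℝ n (fun Y => u ((k : ℝ)⁻¹ • Y) * ψ Y) X‖ ≤
        ((k : ℝ) ^ (N + 1))⁻¹ * C) :
    ∃ c : ℝ, 0 < c ∧ ∀ ξ : EuclideanSpace ℝ (Fin d), ∀ k : ℕ, 1 ≤ k →
      ‖∫ X, u ((k : ℝ)⁻¹ • X) *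
          Complex.exp (Complex.I * ((inner ℝ ξ X : ℝ) : ℂ)) * ψ X‖ ≤
        ((k : ℝ) ^ (N + 1))⁻¹ * c / (1 + ‖ξ‖ ^ 2) ^ R := by
  classical
  choose CB hCBpos hCB using hB
  -- the Schwartz maps g k
  have hgex : ∃ g : ∀ k : ℕ, 1 ≤ k → SchwartzMap (EuclideanSpace ℝ (Fin d)) ℂ,
      ∀ k (hk : 1 ≤ k), ⇑(g k hk) = fun Y => u ((k : ℝ)⁻¹ • Y) * ψ Y := by
    refine ⟨fun k hk => ⟨fun Y => u ((k : ℝ)⁻¹ • Y) * ψ Y,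
      ((hu_smooth.of_le (by simp)).comp (contDiff_id.const_smul _)).mul ψ.smooth',
      fun ℓ n => ⟨((k : ℝ) ^ (N + 1))⁻¹ * CB ℓ n, hCB ℓ n k hk⟩⟩, fun k hk => rfl⟩
  obtain ⟨g, hg⟩ := hgex
  -- seminorm bounds for g k
  have hgsem : ∀ ℓ n k (hk : 1 ≤ k),
      SchwartzMap.seminorm ℝ ℓ n (g k hk) ≤ ((k : ℝ) ^ (N + 1))⁻¹ * CB ℓ n := by
    intro ℓ n k hk
    refine SchwartzMap.seminorm_le_bound ℝ ℓ n _
      (mul_nonneg (by positivity) (hCBpos ℓ n).le) ?_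
    rw [hg k hk]
    exact hCB ℓ n k hk
  -- Fourier transform CLM and its continuity bounds
  set F : SchwartzMap (EuclideanSpace ℝ (Fin d)) ℂ →L[ℝ]
      SchwartzMap (EuclideanSpace ℝ (Fin d)) ℂ :=
    (SchwartzMap.fourierTransformCLM ℂ).restrictScalars ℝ with hF
  set p := schwartzSeminormFamily ℝ (EuclideanSpace ℝ (Fin d)) ℂ with hp
  have hbd : ∀ i : ℕ × ℕ, ∃ s : Finset (ℕ × ℕ), ∃ C : NNReal, C ≠ 0 ∧
      (p i).comp F.toLinearMap ≤ C • s.sup p := by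
    intro i
    apply Seminorm.bound_of_continuous (schwartz_withSeminorms ℝ _ ℂ)
    have : ⇑((p i).comp F.toLinearMap) = ⇑(p i) ∘ ⇑F := rfl
    rw [this]
    exact ((schwartz_withSeminorms ℝ _ ℂ).continuous_seminorm i).comp F.continuous
  choose s Cq hCq0 hCqle using hbd
  -- constants
  set D : ℕ × ℕ → ℝ := fun i => ∑ j ∈ s i, CB j.1 j.2 with hD
  have hD0 : ∀ i, 0 ≤ D i := fun i =>
    Finset.sum_nonneg fun j _ => (hCBpos j.1 j.2).le
  set A : ℝ := ∑ i ∈ Finset.Iic (2 * R, 0), (Cq i : ℝ) * D i with hA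
  have hA0 : 0 ≤ A :=
    Finset.sum_nonneg fun i _ => mul_nonneg (Cq i).2 (hD0 i)
  refine ⟨(1 + (2 * π) ^ 2) ^ R * 2 ^ (2 * R) * (1 + A), by positivity, ?_⟩
  intro ξ k hk
  have hk1 : (1 : ℝ) ≤ (k : ℝ) := by exact_mod_cast hk
  have hkinv : (0:ℝ) ≤ ((k : ℝ) ^ (N + 1))⁻¹ := by positivity
  set w : EuclideanSpace ℝ (Fin d) := (-(2 * π)⁻¹ : ℝ) • ξ with hw
  -- rewrite the integral as a Fourier integral
  have hIeq : (∫ X, u ((k : ℝ)⁻¹ • X) *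
      Complex.exp (Complex.I * ((inner ℝ ξ X : ℝ) : ℂ)) * ψ X) = 𝓕 (⇑(g k hk)) w := by
    rw [Real.fourier_eq']
    congr 1
    funext v
    have h1 : (inner ℝ v w : ℝ) = -(2 * π)⁻¹ * (inner ℝ ξ v : ℝ) := by
      rw [hw, real_inner_smul_right, real_inner_comm]
    have h2 : (-2 * π * (inner ℝ v w : ℝ)) = (inner ℝ ξ v : ℝ) := by
      rw [h1]
      field_simp
    rw [h2, hg k hk]
    have h3 : (inner ℝ ξ v : ℝ) = (inner ℝ v ξ : ℝ) := real_inner_comm _ _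
    rw [smul_eq_mul]
    rw [show Complex.I * ((inner ℝ ξ v : ℝ) : ℂ) = ((inner ℝ ξ v : ℝ) : ℂ) * Complex.I from
      mul_comm _ _]
    ring
  -- the transformed function
  set h := F (g k hk) with hhdef
  have hcoe : ⇑h = 𝓕 ⇑(g k hk) := rfl
  -- norms of ξ and w
  have hπ : (0:ℝ) < 2 * π := by positivity
  have hwn : ‖w‖ = (2 * π)⁻¹ * ‖ξ‖ := by
    rw [hw, norm_smul, Real.norm_eq_abs, abs_neg, abs_inv, abs_of_pos hπ]
  have hξw : ‖ξ‖ = (2 * π) * ‖w‖ := by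
    rw [hwn]
    field_simp
  -- sup bound for the Fourier side
  have hsup : (Finset.Iic (2 * R, 0)).sup p h ≤ ((k : ℝ) ^ (N + 1))⁻¹ * (1 + A) := by
    apply Seminorm.finset_sup_apply_le (by
      have : (0:ℝ) ≤ 1 + A := by linarith
      positivity)
    intro i hi
    have h1 : p i h ≤ (Cq i : ℝ) * ((s i).sup p (g k hk)) := by
      have := hCqle i (g k hk)
      simpa [Seminorm.comp_apply, Seminorm.smul_apply, NNReal.smul_def, smul_eq_mul]
        using this
    have h2 : (s i).sup p (g k hk) ≤ ((k : ℝ) ^ (N + 1))⁻¹ * D i := by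
      apply Seminorm.finset_sup_apply_le (mul_nonneg hkinv (hD0 i))
      intro j hj
      refine (hgsem j.1 j.2 k hk).trans ?_
      refine mul_le_mul_of_nonneg_left ?_ hkinv
      exact Finset.single_le_sum (fun j _ => (hCBpos j.1 j.2).le) hj
    have h3 : (Cq i : ℝ) * D i ≤ A :=
      Finset.single_le_sum (fun i _ => mul_nonneg (Cq i).2 (hD0 i)) hi
    calc p i h ≤ (Cq i : ℝ) * (((k : ℝ) ^ (N + 1))⁻¹ * D i) :=
          h1.trans (mul_le_mul_of_nonneg_left h2 (Cq i).2)
      _ = ((k : ℝ) ^ (N + 1))⁻¹ * ((Cq i : ℝ) * D i) := by ring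
      _ ≤ ((k : ℝ) ^ (N + 1))⁻¹ * (1 + A) := by
          apply mul_le_mul_of_nonneg_left (by linarith) hkinv
  -- pointwise bound from seminorms
  have hone := SchwartzMap.one_add_le_sup_seminorm_apply (𝕜 := ℝ)
    (m := (2 * R, 0)) (k := 2 * R) (n := 0) le_rfl le_rfl h w
  rw [norm_iteratedFDeriv_zero] at hone
  have hfam : (fun (m : ℕ × ℕ) => SchwartzMap.seminorm ℝ
      (E := EuclideanSpace ℝ (Fin d)) (F := ℂ) m.1 m.2) = p := rfl
  rw [hfam] at hone
  -- main estimate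
  have hwpow : (1 + ‖ξ‖ ^ 2) ^ R ≤ (1 + (2 * π) ^ 2) ^ R * (1 + ‖w‖) ^ (2 * R) := by
    have h1 : 1 + ‖ξ‖ ^ 2 ≤ (1 + (2 * π) ^ 2) * (1 + ‖w‖) ^ 2 := by
      rw [hξw]
      nlinarith [norm_nonneg w, hπ]
    calc (1 + ‖ξ‖ ^ 2) ^ R ≤ ((1 + (2 * π) ^ 2) * (1 + ‖w‖) ^ 2) ^ R :=
          pow_le_pow_left₀ (by positivity) h1 R
      _ = (1 + (2 * π) ^ 2) ^ R * (1 + ‖w‖) ^ (2 * R) := by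
          rw [mul_pow, ← pow_mul, mul_comm 2 R]
  have est : (1 + ‖ξ‖ ^ 2) ^ R * ‖h w‖ ≤
      ((k : ℝ) ^ (N + 1))⁻¹ * ((1 + (2 * π) ^ 2) ^ R * 2 ^ (2 * R) * (1 + A)) := by
    calc (1 + ‖ξ‖ ^ 2) ^ R * ‖h w‖
        ≤ ((1 + (2 * π) ^ 2) ^ R * (1 + ‖w‖) ^ (2 * R)) * ‖h w‖ :=
          mul_le_mul_of_nonneg_right hwpow (norm_nonneg _)
      _ = (1 + (2 * π) ^ 2) ^ R * ((1 + ‖w‖) ^ (2 * R) * ‖h w‖) := by ring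
      _ ≤ (1 + (2 * π) ^ 2) ^ R * (2 ^ (2 * R) * ((Finset.Iic (2 * R, 0)).sup p h)) := by
          apply mul_le_mul_of_nonneg_left hone (by positivity)
      _ ≤ (1 + (2 * π) ^ 2) ^ R * (2 ^ (2 * R) *
            (((k : ℝ) ^ (N + 1))⁻¹ * (1 + A))) := by
          apply mul_le_mul_of_nonneg_left
            (mul_le_mul_of_nonneg_left hsup (by positivity)) (by positivity)
      _ = ((k : ℝ) ^ (N + 1))⁻¹ * ((1 + (2 * π) ^ 2) ^ R * 2 ^ (2 * R) * (1 + A)) := by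
          ring
  -- conclude
  rw [hIeq, ← hcoe]
  have hP : (0:ℝ) < (1 + ‖ξ‖ ^ 2) ^ R := by positivity
  rw [mul_comm] at est
  exact (le_div_iff₀ hP).mpr est

/-- rapid decay estimate for `∫ u(X/k) e^{i⟨ξ,X⟩} ψ(X) dX` when `u`
vanishes at order `N` at the origin. -/
theorem stmt_2 (d : ℕ) (hd : 1 ≤ d) (N : ℕ)
    (u : EuclideanSpace ℝ (Fin d) → ℂ)
    (hu_smooth : ContDiff ℝ (⊤ : ℕ∞) u)
    (hu_growth : ∀ n : ℕ, ∃ C : ℝ, 0 < C ∧ ∃ m : ℕ, ∀ X,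
        ‖iteratedFDeriv ℝ n u X‖ ≤ C * (1 + ‖X‖) ^ m)
    (hu_vanish : ∀ j ≤ N, iteratedFDeriv ℝ j u 0 = 0)
    (ψ : SchwartzMap (EuclideanSpace ℝ (Fin d)) ℂ)
    (R : ℕ) :
    ∃ c : ℝ, 0 < c ∧ ∀ ξ : EuclideanSpace ℝ (Fin d), ∀ k : ℕ, 1 ≤ k →
      ‖∫ X, u ((k : ℝ)⁻¹ • X) *
          Complex.exp (Complex.I * ((inner ℝ ξ X : ℝ) : ℂ)) * ψ X‖ ≤
        ((k : ℝ) ^ (N + 1))⁻¹ * c / (1 + ‖ξ‖ ^ 2) ^ R :=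
  aux_final hu_smooth ψ R
    (aux_B hu_smooth ψ (aux_B1 hu_smooth hu_vanish hu_growth))
end

section
/- Let a ∈ ℝ, let φ : ℝ → ℂ be a smooth compactly supported function, and let N ≥ 1 be an integer. Then there exists C_N > 0 such that for every integer k ≥ 1, | Σ_{j=0}^{∞} φ(a + (2j+1)/k) − ( (k/2) ∫_{a}^{∞} φ(ξ) dξ − Σ_{n=1}^{N} (2/k)^{n-1} (B_n(1/2)/n!) φ^{(n-1)}(a) ) | ≤ C_N k^{-N}, where B_n denotes the n-th Bernoulli polynomial (with the convention B_1(x) = x − 1/2) and φ^{(m)} the m-th derivative of φ. Only even integers n contribute to the sum, since B_n(1/2) = 0 for all odd n ≥ 1. -/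
open MeasureTheory Finset Polynomial

/-! ### Odd Bernoulli values at 1/2 vanish -/

lemma bernoulli_eval_half_odd {n : ℕ} (hn : Odd n) :
    (Polynomial.bernoulli n).eval (1 / 2 : ℚ) = 0 := by
  set p := Polynomial.bernoulli n with hp
  set g : Polynomial ℚ := p - (-1 : ℚ) ^ n • p.comp (1 - Polynomial.X) with hg
  have hgeval : ∀ x : ℚ, g.eval x = p.eval x - (-1 : ℚ) ^ n * p.eval (1 - x) := by
    intro x; simp [hg, eval_comp]
  have hstep : ∀ x : ℚ, g.eval (x + 1) = g.eval x := by
    intro x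
    have h1 : p.eval (1 + x) = p.eval x + n * x ^ (n - 1) :=
      Polynomial.bernoulli_eval_one_add n x
    have h2 : p.eval (1 + -x) = p.eval (-x) + n * (-x) ^ (n - 1) :=
      Polynomial.bernoulli_eval_one_add n (-x)
    have hodd : (-1 : ℚ) ^ n = -1 := hn.neg_one_pow
    have heven : (-x : ℚ) ^ (n - 1) = x ^ (n - 1) := by
      rcases hn with ⟨m, rfl⟩
      have : 2 * m + 1 - 1 = 2 * m := by omega
      rw [this]
      exact (Even.neg_pow ⟨m, by ring⟩ x)
    rw [hgeval, hgeval]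
    have hx1 : x + 1 = 1 + x := by ring
    rw [hx1, h1]
    have hx2 : (1 : ℚ) - (1 + x) = -x := by ring
    rw [hx2]
    have hx3 : (1 : ℚ) - x = 1 + -x := by ring
    rw [hx3, h2, hodd, heven]
    ring
  have hnat : ∀ m : ℕ, g.eval (m : ℚ) = g.eval 0 := by
    intro m
    induction m with
    | zero => simp
    | succ m ih => rw [Nat.cast_succ, hstep, ih]
  have h0 : g.eval 0 = 0 := by
    have hodd : (-1 : ℚ) ^ n = -1 := hn.neg_one_pow
    rw [hgeval, hodd]
    simp only [sub_zero]
    rw [Polynomial.bernoulli_eval_zero, Polynomial.bernoulli_eval_one]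
    rcases eq_or_ne n 1 with rfl | hne
    · rw [_root_.bernoulli_one, bernoulli'_one]; ring
    · have h1 : 1 < n := by
        rcases hn with ⟨m, rfl⟩; omega
      rw [bernoulli_eq_bernoulli'_of_ne_one hne,
        bernoulli'_eq_zero_of_odd hn h1]
      ring
  have hgz : g = 0 := by
    apply Polynomial.eq_zero_of_infinite_isRoot
    apply Set.infinite_of_injective_forall_mem (f := fun m : ℕ => (m : ℚ))
      Nat.cast_injective
    intro m
    simp only [Set.mem_setOf_eq, IsRoot.def]
    rw [hnat m, h0]
  have := hgeval (1 / 2)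
  rw [hgz] at this
  simp only [eval_zero] at this
  have hodd : (-1 : ℚ) ^ n = -1 := hn.neg_one_pow
  rw [hodd] at this
  norm_num at this
  linarith

/-! ### Normalized Bernoulli polynomials over ℂ -/

noncomputable def qb (m : ℕ) : Polynomial ℂ :=
  Polynomial.C ((m.factorial : ℂ)⁻¹) * (Polynomial.bernoulli m).map (algebraMap ℚ ℂ)

lemma qb_zero : qb 0 = 1 := by
  simp [qb, Polynomial.bernoulli_zero]

lemma qb_deriv (m : ℕ) : (qb (m + 1)).derivative = qb m := by
  rw [qb, qb, Polynomial.derivative_C_mul, Polynomial.derivative_map,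
    Polynomial.derivative_bernoulli_add_one, Polynomial.map_mul, ← mul_assoc]
  congr 1
  have h2 : (((m : ℚ[X]) + 1)).map (algebraMap ℚ ℂ) = Polynomial.C ((m : ℂ) + 1) := by
    rw [Polynomial.map_add, Polynomial.map_natCast, Polynomial.map_one, ← Polynomial.C_eq_natCast,
      ← Polynomial.C_1, ← Polynomial.C_add]
  rw [h2, ← Polynomial.C_mul]
  congr 1
  rw [Nat.factorial_succ]
  push_cast
  rw [mul_inv]
  rw [mul_assoc, mul_comm ((m:ℂ)+1)⁻¹, mul_assoc]
  have hne : ((m : ℂ) + 1) ≠ 0 := by exact_mod_cast Nat.succ_ne_zero m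
  rw [mul_inv_cancel₀ hne]
  ring

lemma qb_eval_rat (m : ℕ) (x : ℚ) :
    (qb m).eval ((x : ℂ)) = (((Polynomial.bernoulli m).eval x : ℚ) : ℂ) / (m.factorial : ℂ) := by
  rw [qb, Polynomial.eval_mul, Polynomial.eval_C, Polynomial.eval_map]
  have : ((x : ℂ)) = algebraMap ℚ ℂ x := by simp
  rw [this, Polynomial.eval₂_at_apply]
  simp [div_eq_inv_mul]

/-! ### Scaled shifted Bernoulli functions -/

noncomputable def ub (m : ℕ) (h x c : ℝ) : ℝ → ℂ :=
  fun t => (h : ℂ) ^ m * (qb m).eval ((((t - x) / h + c : ℝ)) : ℂ)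

lemma ub_cont (m : ℕ) (h x c : ℝ) : Continuous (ub m h x c) := by
  apply Continuous.mul continuous_const
  exact (qb m).continuous_aeval.comp (Complex.continuous_ofReal.comp (by continuity))

lemma ub_zero_apply (h x c t : ℝ) : ub 0 h x c t = 1 := by
  simp [ub, qb_zero]

lemma ub_hasDerivAt (m : ℕ) {h : ℝ} (x c : ℝ) (hh : h ≠ 0) (t : ℝ) :
    HasDerivAt (ub (m + 1) h x c) (ub m h x c t) t := by
  have hinner : HasDerivAt (fun z : ℂ => (z - (x : ℂ)) / (h : ℂ) + (c : ℂ))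
      (1 / (h : ℂ)) (t : ℂ) := by
    simpa using (((hasDerivAt_id ((t : ℝ) : ℂ)).sub_const (x : ℂ)).div_const
      (h : ℂ)).add_const (c : ℂ)
  have hpoly : HasDerivAt (fun z : ℂ => (qb (m + 1)).eval z)
      ((qb (m + 1)).derivative.eval ((((t : ℂ) - x) / h + c))) ((((t : ℂ) - x) / h + c)) :=
    Polynomial.hasDerivAt _ _
  have hcomp : HasDerivAt (fun z : ℂ => (qb (m + 1)).eval ((z - (x : ℂ)) / h + c))
      ((qb (m + 1)).derivative.eval ((((t : ℂ) - x) / h + c)) * (1 / (h : ℂ))) (t : ℂ) :=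
    by have := HasDerivAt.comp ((t : ℝ) : ℂ) hpoly hinner; exact this
  have hre : HasDerivAt (fun s : ℝ => (qb (m + 1)).eval (((s : ℂ) - (x : ℂ)) / h + c))
      ((qb (m + 1)).derivative.eval ((((t : ℂ) - x) / h + c)) * (1 / (h : ℂ))) t :=
    hcomp.comp_ofReal
  have heq : ∀ s : ℝ, (h : ℂ) ^ (m + 1) * (qb (m + 1)).eval (((s : ℂ) - (x : ℂ)) / h + c)
      = ub (m + 1) h x c s := by
    intro s
    unfold ub
    congr 2
    push_cast
    ring
  have := (hre.const_mul ((h : ℂ) ^ (m + 1)))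
  have h2 : (h : ℂ) ^ (m + 1) * ((qb (m + 1)).derivative.eval ((((t : ℂ) - x) / h + c)) * (1 / (h : ℂ)))
      = ub m h x c t := by
    unfold ub
    rw [qb_deriv]
    have hcne : (h : ℂ) ≠ 0 := by exact_mod_cast hh
    have harg : ((((t - x) / h + c : ℝ)) : ℂ) = (((t : ℂ) - x) / h + c) := by push_cast; ring
    rw [harg]
    field_simp
    ring
  rw [h2] at this
  exact this.congr_of_eventuallyEq (by filter_upwards with s using (heq s).symm)

lemma ub_eval_rat (m : ℕ) (h x c t : ℝ) (r : ℚ) (hr : (t - x) / h + c = (r : ℝ)) :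
    ub m h x c t
      = (h : ℂ) ^ m * ((((Polynomial.bernoulli m).eval r : ℚ) : ℂ) / (m.factorial : ℂ)) := by
  unfold ub
  rw [hr]
  rw [show (((r : ℝ)) : ℂ) = ((r : ℚ) : ℂ) by norm_cast]
  rw [qb_eval_rat]

/-! ### coefficient -/

noncomputable def bc (n : ℕ) : ℂ :=
  (((Polynomial.bernoulli n).eval (1 / 2 : ℚ) : ℚ) : ℂ) / (n.factorial : ℂ)

lemma bc_sign (n : ℕ) : (-1 : ℂ) ^ n * bc n = bc n := by
  rcases Nat.even_or_odd n with he | ho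
  · rw [he.neg_one_pow, one_mul]
  · rw [bc, bernoulli_eval_half_odd ho]
    simp

/-! ### per-interval Euler–Maclaurin -/

section Key

variable {φ : ℝ → ℂ} (hφ : ContDiff ℝ (⊤ : ℕ∞) φ)

include hφ in
lemma Phi_hasDerivAt (m : ℕ) (t : ℝ) :
    HasDerivAt (iteratedDeriv m φ) (iteratedDeriv (m + 1) φ t) t := by
  rw [iteratedDeriv_succ]
  refine DifferentiableAt.hasDerivAt ?_
  exact (hφ.differentiable_iteratedDeriv m (by exact_mod_cast ENat.coe_lt_top m)).differentiableAt

include hφ in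
lemma Phi_cont (m : ℕ) : Continuous (iteratedDeriv m φ) :=
  hφ.continuous_iteratedDeriv m (by exact_mod_cast le_top)

include hφ in
lemma key_interval {h : ℝ} (hh : 0 < h) (x : ℝ) (m : ℕ) (hm : 1 ≤ m) :
    (h : ℂ) * φ (x + h / 2) =
      (∫ t in x..(x + h), φ t) +
      (∑ n ∈ Finset.Icc 2 m, bc n * (h : ℂ) ^ n *
        (iteratedDeriv (n - 1) φ (x + h) - iteratedDeriv (n - 1) φ x)) +
      (-1 : ℂ) ^ (m + 1) *
        ((∫ t in x..(x + h / 2), iteratedDeriv m φ t * ub m h x (1 / 2) t) +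
         (∫ t in (x + h / 2)..(x + h), iteratedDeriv m φ t * ub m h x (-(1 / 2)) t)) := by
  have hne : h ≠ 0 := hh.ne'
  -- boundary value computations
  have hx_mid : ((x + h / 2) - x) / h + 1 / 2 = ((1 : ℚ) : ℝ) := by
    field_simp
    ring
  have hx_x : (x - x) / h + 1 / 2 = ((1 / 2 : ℚ) : ℝ) := by
    rw [sub_self, zero_div, zero_add]; norm_num
  have hx_mid' : ((x + h / 2) - x) / h + (-(1 / 2)) = ((0 : ℚ) : ℝ) := by
    field_simp
    ring
  have hx_end : ((x + h) - x) / h + (-(1 / 2)) = ((1 / 2 : ℚ) : ℝ) := by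
    field_simp
    ring
  -- the integration-by-parts identities, for any degree
  have ibp : ∀ (n : ℕ) (c d : ℝ),
      (∫ t in c..d, iteratedDeriv n φ t * ub n h x (1 / 2) t)
        = iteratedDeriv n φ d * ub (n + 1) h x (1 / 2) d
          - iteratedDeriv n φ c * ub (n + 1) h x (1 / 2) c
          - ∫ t in c..d, iteratedDeriv (n + 1) φ t * ub (n + 1) h x (1 / 2) t := by
    intro n c d
    exact intervalIntegral.integral_mul_deriv_eq_deriv_mul
      (fun t _ => Phi_hasDerivAt hφ n t)
      (fun t _ => ub_hasDerivAt n x (1 / 2) hne t)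
      ((Phi_cont hφ (n + 1)).intervalIntegrable c d)
      ((ub_cont n h x (1 / 2)).intervalIntegrable c d)
  have ibp' : ∀ (n : ℕ) (c d : ℝ),
      (∫ t in c..d, iteratedDeriv n φ t * ub n h x (-(1 / 2)) t)
        = iteratedDeriv n φ d * ub (n + 1) h x (-(1 / 2)) d
          - iteratedDeriv n φ c * ub (n + 1) h x (-(1 / 2)) c
          - ∫ t in c..d, iteratedDeriv (n + 1) φ t * ub (n + 1) h x (-(1 / 2)) t := by
    intro n c d
    exact intervalIntegral.integral_mul_deriv_eq_deriv_mul
      (fun t _ => Phi_hasDerivAt hφ n t)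
      (fun t _ => ub_hasDerivAt n x (-(1 / 2)) hne t)
      ((Phi_cont hφ (n + 1)).intervalIntegrable c d)
      ((ub_cont n h x (-(1 / 2))).intervalIntegrable c d)
  induction m, hm using Nat.le_induction with
  | base =>
    -- m = 1
    have E1 := ibp 0 x (x + h / 2)
    have E2 := ibp' 0 x (x + h / 2)  -- unused
    clear E2
    have E2 := ibp' 0 (x + h / 2) (x + h)
    rw [ub_eval_rat 1 h x (1 / 2) (x + h / 2) 1 hx_mid] at E1
    rw [ub_eval_rat 1 h x (1 / 2) x (1 / 2) hx_x] at E1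
    rw [ub_eval_rat 1 h x (-(1 / 2)) (x + h / 2) 0 hx_mid'] at E2
    rw [ub_eval_rat 1 h x (-(1 / 2)) (x + h) (1 / 2) hx_end] at E2
    rw [Polynomial.bernoulli_eval_one, bernoulli'_one] at E1
    rw [bernoulli_eval_half_odd odd_one] at E1 E2
    rw [Polynomial.bernoulli_eval_zero, _root_.bernoulli_one] at E2
    simp only [iteratedDeriv_zero, ub_zero_apply, mul_one] at E1 E2
    have hsplit : (∫ t in x..(x + h / 2), φ t) + (∫ t in (x + h / 2)..(x + h), φ t)
        = ∫ t in x..(x + h), φ t := by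
      apply intervalIntegral.integral_add_adjacent_intervals
      · exact (hφ.continuous).intervalIntegrable _ _
      · exact (hφ.continuous).intervalIntegrable _ _
    simp only [zero_add] at E1 E2
    rw [show Finset.Icc 2 1 = (∅ : Finset ℕ) by rfl, Finset.sum_empty, ← hsplit, E1, E2]
    push_cast
    norm_num [Nat.factorial]
    ring
  | succ m hm ih =>
    have F1 := ibp m x (x + h / 2)
    have F2 := ibp' m (x + h / 2) (x + h)
    rw [ub_eval_rat (m + 1) h x (1 / 2) (x + h / 2) 1 hx_mid] at F1
    rw [ub_eval_rat (m + 1) h x (1 / 2) x (1 / 2) hx_x] at F1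
    rw [ub_eval_rat (m + 1) h x (-(1 / 2)) (x + h / 2) 0 hx_mid'] at F2
    rw [ub_eval_rat (m + 1) h x (-(1 / 2)) (x + h) (1 / 2) hx_end] at F2
    rw [show ((((Polynomial.bernoulli (m + 1)).eval (1 / 2 : ℚ) : ℚ) : ℂ) /
        ((m + 1).factorial : ℂ)) = bc (m + 1) from rfl] at F1 F2
    rw [Polynomial.bernoulli_eval_one,
      ← bernoulli_eq_bernoulli'_of_ne_one (by omega : m + 1 ≠ 1)] at F1
    rw [Polynomial.bernoulli_eval_zero] at F2
    have hsig := bc_sign (m + 1)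
    rw [ih, Finset.sum_Icc_succ_top (by omega : 2 ≤ m + 1), F1, F2]
    simp only [Nat.add_sub_cancel]
    linear_combination ((h : ℂ) ^ (m + 1) *
      (iteratedDeriv m φ (x + h) - iteratedDeriv m φ x)) * hsig

end Key

/-! ### sum juggling -/

lemma sum_shift (g : ℕ → ℂ) (N : ℕ) :
    ∑ n ∈ Finset.Icc 2 (N + 1), g n = ∑ n ∈ Finset.Icc 1 N, g (n + 1) := by
  induction N with
  | zero => simp [show Finset.Icc 2 1 = (∅ : Finset ℕ) from rfl]
  | succ N ih =>
    rw [Finset.sum_Icc_succ_top (by omega : 2 ≤ N + 1 + 1),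
      Finset.sum_Icc_succ_top (by omega : 1 ≤ N + 1), ih]

lemma sum_tel (g : ℕ → ℂ) (N : ℕ) (hN : 1 ≤ N) :
    ∑ n ∈ Finset.Icc 1 N, (g (n + 1) - g n) = g (N + 1) - g 1 := by
  induction N, hN using Nat.le_induction with
  | base => simp
  | succ N hN ih =>
    rw [Finset.sum_Icc_succ_top (by omega : 1 ≤ N + 1), ih]
    ring

/-! ### main theorem -/

/-- the variation of the Euler–Maclaurin formula
`Σ_{j≥0} φ(a+(2j+1)/k) ≡ (k/2)∫_a^∞ φ(ξ)dξ − Σ_{n≥1} (2/k)^{n-1} (B_n(1/2)/n!) φ^{(n-1)}(a)`,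
where `B_n` is the `n`-th Bernoulli polynomial (convention `B₁(x) = x − 1/2`). -/
theorem stmt_9 (a : ℝ) (φ : ℝ → ℂ) (hφ : ContDiff ℝ (⊤ : ℕ∞) φ)
    (hφc : HasCompactSupport φ) (N : ℕ) (hN : 1 ≤ N) :
    ∃ C : ℝ, 0 < C ∧ ∀ k : ℕ, 1 ≤ k →
      ‖(∑' j : ℕ, φ (a + (2 * (j : ℝ) + 1) / k)) -
        ((k : ℂ) / 2 * (∫ ξ in Set.Ioi a, φ ξ) -
          ∑ n ∈ Finset.Icc 1 N, (2 / (k : ℂ)) ^ (n - 1) *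
            ((((Polynomial.bernoulli n).eval (1 / 2 : ℚ) : ℚ) : ℂ) /
              (n.factorial : ℂ)) *
            iteratedDeriv (n - 1) φ a)‖ ≤
        C * ((k : ℝ) ^ N)⁻¹ := by
  -- support radius
  obtain ⟨R, hRsub⟩ := hφc.isBounded.subset_closedBall 0
  have hsupp : ∀ m, tsupport (iteratedDeriv m φ) ⊆ tsupport φ := by
    intro m
    induction m with
    | zero => rw [iteratedDeriv_zero]
    | succ m ih =>
      rw [iteratedDeriv_succ]
      exact (closure_minimal support_deriv_subset (isClosed_tsupport _)).trans ih
  have hzero : ∀ (m : ℕ) (y : ℝ), R < y → iteratedDeriv m φ y = 0 := by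
    intro m y hy
    apply image_eq_zero_of_notMem_tsupport
    intro hmem
    have h1 := hRsub (hsupp m hmem)
    rw [Metric.mem_closedBall, Real.dist_eq, sub_zero] at h1
    have h2 := (abs_le.mp h1).2
    linarith
  have hφzero : ∀ y : ℝ, R < y → φ y = 0 := by
    intro y hy
    have := hzero 0 y hy
    rwa [iteratedDeriv_zero] at this
  have hInt : Integrable φ := hφ.continuous.integrable_of_hasCompactSupport hφc
  set L : ℕ := ⌈(R - a) / 2⌉₊ + 1 with hLdef
  have hRL : R < a + 2 * L := by
    have h1 : (R - a) / 2 ≤ (⌈(R - a) / 2⌉₊ : ℝ) := Nat.le_ceil _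
    have h2 : (L : ℝ) = (⌈(R - a) / 2⌉₊ : ℝ) + 1 := by rw [hLdef]; push_cast; ring
    rw [h2]; linarith
  -- bounds
  obtain ⟨CB0, hCB0⟩ := (isCompact_Icc (a := (0 : ℝ)) (b := 1)).exists_bound_of_continuousOn
    (f := fun s : ℝ => (qb (N + 1)).eval ((s : ℝ) : ℂ))
    (((qb (N + 1)).continuous_aeval.comp Complex.continuous_ofReal).continuousOn)
  set CB := max CB0 0 with hCBdef
  have hCB : ∀ s : ℝ, s ∈ Set.Icc (0 : ℝ) 1 → ‖(qb (N + 1)).eval ((s : ℝ) : ℂ)‖ ≤ CB :=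
    fun s hs => (hCB0 s hs).trans (le_max_left _ _)
  have hCBnn : 0 ≤ CB := le_max_right _ _
  have hcs : HasCompactSupport (iteratedDeriv (N + 1) φ) :=
    IsCompact.of_isClosed_subset hφc (isClosed_tsupport _) (hsupp (N + 1))
  obtain ⟨Cp0, hCp0⟩ :=
    (hφ.continuous_iteratedDeriv (N + 1) (by exact_mod_cast le_top)).bounded_above_of_compact_support hcs
  set Cp := max Cp0 0 with hCpdef
  have hCp : ∀ t : ℝ, ‖iteratedDeriv (N + 1) φ t‖ ≤ Cp :=
    fun t => (hCp0 t).trans (le_max_left _ _)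
  have hCpnn : 0 ≤ Cp := le_max_right _ _
  have hbc1 : bc 1 = 0 := by
    rw [bc, bernoulli_eval_half_odd odd_one]
    simp
  refine ⟨‖bc (N + 1)‖ * 2 ^ N * ‖iteratedDeriv N φ a‖ + (L : ℝ) * 2 ^ (N + 1) * CB * Cp + 1,
    by positivity, ?_⟩
  intro k hk
  have hk0 : (0 : ℝ) < k := by exact_mod_cast hk
  have hkne : (k : ℝ) ≠ 0 := hk0.ne'
  set h : ℝ := 2 / k with hhdef
  have hh : 0 < h := by positivity
  set M : ℕ := k * L with hMdef
  set f : ℕ → ℝ := fun j => a + j * h with hfdef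
  have hf0 : f 0 = a := by simp [hfdef]
  have hstep : ∀ j : ℕ, f j + h = f (j + 1) := by
    intro j; simp only [hfdef]; push_cast; ring
  have hmid : ∀ j : ℕ, f j + h / 2 = a + (2 * (j : ℝ) + 1) / k := by
    intro j; simp only [hfdef, hhdef]; field_simp; ring
  have hfM : f M = a + 2 * L := by
    simp only [hfdef, hMdef, hhdef]; push_cast; field_simp
  have hfMgt : R < f M := by rw [hfM]; exact hRL
  have haM : a ≤ f M := by
    rw [hfM]
    have : (0 : ℝ) ≤ (L : ℝ) := Nat.cast_nonneg L
    linarith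
  -- tsum to finite sum
  have htsum : (∑' j : ℕ, φ (a + (2 * (j : ℝ) + 1) / k))
      = ∑ j ∈ Finset.range M, φ (a + (2 * (j : ℝ) + 1) / k) := by
    apply tsum_eq_sum
    intro j hj
    apply hφzero
    have hjM : (M : ℝ) ≤ (j : ℝ) := by
      exact_mod_cast Nat.le_of_not_lt (fun hlt => hj (Finset.mem_range.mpr hlt))
    have hML : (M : ℝ) = (k : ℝ) * L := by rw [hMdef]; push_cast; ring
    have hge : (2 * (M : ℝ) + 1) / k ≤ (2 * (j : ℝ) + 1) / k := by gcongr
    have hcomp : a + (2 * (M : ℝ) + 1) / k = a + 2 * L + 1 / k := by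
      rw [hML]; field_simp; ring
    have hpos : 0 < 1 / (k : ℝ) := by positivity
    have := hRL
    linarith
  -- finite sum of midpoints
  have hSmid : (∑ j ∈ Finset.range M, φ (a + (2 * (j : ℝ) + 1) / k))
      = ∑ j ∈ Finset.range M, φ (f j + h / 2) := by
    apply Finset.sum_congr rfl
    intro j _
    rw [hmid j]
  -- big sum formula
  have hbig : (h : ℂ) * ∑ j ∈ Finset.range M, φ (f j + h / 2)
      = (∫ t in a..(f M), φ t)
        + (∑ n ∈ Finset.Icc 2 (N + 1), bc n * (h : ℂ) ^ n *
            (iteratedDeriv (n - 1) φ (f M) - iteratedDeriv (n - 1) φ a))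
        + (-1 : ℂ) ^ (N + 2) *
          (∑ j ∈ Finset.range M,
            ((∫ t in (f j)..(f j + h / 2),
                iteratedDeriv (N + 1) φ t * ub (N + 1) h (f j) (1 / 2) t)
             + (∫ t in (f j + h / 2)..(f j + h),
                iteratedDeriv (N + 1) φ t * ub (N + 1) h (f j) (-(1 / 2)) t))) := by
    rw [Finset.mul_sum]
    rw [Finset.sum_congr rfl (fun j _ => key_interval hφ hh (f j) (N + 1) (by omega))]
    rw [Finset.sum_add_distrib, Finset.sum_add_distrib]
    congr 1
    · congr 1
      · rw [Finset.sum_congr rfl (fun j (_ : j ∈ Finset.range M) => by rw [hstep j] :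
          ∀ j ∈ Finset.range M, (∫ t in (f j)..(f j + h), φ t) = ∫ t in (f j)..(f (j + 1)), φ t)]
        rw [intervalIntegral.sum_integral_adjacent_intervals
          (fun i _ => hφ.continuous.intervalIntegrable _ _)]
        rw [hf0]
      · rw [Finset.sum_comm]
        apply Finset.sum_congr rfl
        intro n _
        rw [Finset.sum_congr rfl (fun j (_ : j ∈ Finset.range M) => by rw [hstep j] :
          ∀ j ∈ Finset.range M,
            bc n * (h : ℂ) ^ n * (iteratedDeriv (n - 1) φ (f j + h) - iteratedDeriv (n - 1) φ (f j))
            = bc n * (h : ℂ) ^ n *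
              (iteratedDeriv (n - 1) φ (f (j + 1)) - iteratedDeriv (n - 1) φ (f j)))]
        rw [← Finset.mul_sum,
          Finset.sum_range_sub (fun j => iteratedDeriv (n - 1) φ (f j)) M, hf0]
    · rw [← Finset.mul_sum]
  -- cast of h
  set w : ℂ := 2 / (k : ℂ) with hwdef
  have hwcast : ((h : ℝ) : ℂ) = w := by rw [hhdef, hwdef]; push_cast; ring
  have hkCne : ((k : ℕ) : ℂ) ≠ 0 := Nat.cast_ne_zero.mpr (by omega)
  have hwne : w ≠ 0 := div_ne_zero two_ne_zero hkCne
  have hwk : w * ((k : ℂ) / 2) = 1 := by rw [hwdef]; field_simp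
  rw [hwcast] at hbig
  -- integral over Ioi
  have hI : (∫ ξ in Set.Ioi a, φ ξ) = ∫ t in a..(f M), φ t := by
    have hz : (∫ y in Set.Ioi (f M), φ y) = 0 :=
      MeasureTheory.setIntegral_eq_zero_of_forall_eq_zero
        (fun y hy => hφzero y (lt_trans hfMgt hy))
    rw [← Set.Ioc_union_Ioi_eq_Ioi haM,
      MeasureTheory.setIntegral_union (Set.Ioc_disjoint_Ioi le_rfl) measurableSet_Ioi
        hInt.integrableOn hInt.integrableOn,
      hz, add_zero, intervalIntegral.integral_of_le haM]
  rw [htsum, hSmid, hI]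
  -- name the big expressions
  set S := ∑ j ∈ Finset.range M, φ (f j + h / 2) with hSdef
  set Itot := ∫ t in a..(f M), φ t with hIdef
  set E := ∑ j ∈ Finset.range M,
      ((∫ t in (f j)..(f j + h / 2),
          iteratedDeriv (N + 1) φ t * ub (N + 1) h (f j) (1 / 2) t)
       + (∫ t in (f j + h / 2)..(f j + h),
          iteratedDeriv (N + 1) φ t * ub (N + 1) h (f j) (-(1 / 2)) t)) with hEdef
  set G := ∑ n ∈ Finset.Icc 2 (N + 1), bc n * w ^ n *
      (iteratedDeriv (n - 1) φ (f M) - iteratedDeriv (n - 1) φ a) with hGdef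
  -- G in telescoped form
  have hGsum : G = -(∑ n ∈ Finset.Icc 1 N, bc (n + 1) * w ^ (n + 1) * iteratedDeriv n φ a) := by
    rw [hGdef]
    have e1 : ∀ n ∈ Finset.Icc 2 (N + 1),
        bc n * w ^ n * (iteratedDeriv (n - 1) φ (f M) - iteratedDeriv (n - 1) φ a)
        = -(bc n * w ^ n * iteratedDeriv (n - 1) φ a) := by
      intro n _
      rw [hzero (n - 1) (f M) hfMgt]
      ring
    have hsh := sum_shift (fun n => bc n * w ^ n * iteratedDeriv (n - 1) φ a) N
    simp only [Nat.add_sub_cancel] at hsh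
    rw [Finset.sum_congr rfl e1, Finset.sum_neg_distrib, hsh]
  -- the statement sum
  have hstmt : w * (∑ n ∈ Finset.Icc 1 N, (2 / (k : ℂ)) ^ (n - 1) *
        ((((Polynomial.bernoulli n).eval (1 / 2 : ℚ) : ℚ) : ℂ) / (n.factorial : ℂ)) *
        iteratedDeriv (n - 1) φ a)
      = ∑ n ∈ Finset.Icc 1 N, bc n * w ^ n * iteratedDeriv (n - 1) φ a := by
    rw [Finset.mul_sum]
    apply Finset.sum_congr rfl
    intro n hn
    have h1 : 1 ≤ n := (Finset.mem_Icc.mp hn).1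
    have h2 : n - 1 + 1 = n := by omega
    have hbcn : ((((Polynomial.bernoulli n).eval (1 / 2 : ℚ) : ℚ) : ℂ) / (n.factorial : ℂ))
        = bc n := rfl
    rw [hbcn]
    calc w * ((2 / (k : ℂ)) ^ (n - 1) * bc n * iteratedDeriv (n - 1) φ a)
        = bc n * (w ^ (n - 1) * w) * iteratedDeriv (n - 1) φ a := by rw [← hwdef]; ring
      _ = bc n * w ^ n * iteratedDeriv (n - 1) φ a := by rw [← pow_succ, h2]
  have htel := sum_tel (fun n => bc n * w ^ n * iteratedDeriv (n - 1) φ a) N hN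
  simp only [Nat.add_sub_cancel] at htel
  rw [Finset.sum_sub_distrib] at htel
  -- the main algebraic identity
  have hTeq : S - ((k : ℂ) / 2 * Itot -
      ∑ n ∈ Finset.Icc 1 N, (2 / (k : ℂ)) ^ (n - 1) *
        ((((Polynomial.bernoulli n).eval (1 / 2 : ℚ) : ℚ) : ℂ) / (n.factorial : ℂ)) *
        iteratedDeriv (n - 1) φ a)
      = -(bc (N + 1) * w ^ N * iteratedDeriv N φ a) + (-1 : ℂ) ^ (N + 2) * ((k : ℂ) / 2) * E := by
    apply mul_left_cancel₀ hwne
    linear_combination hbig + hGsum - htel + hstmt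
      - (Itot + (-1 : ℂ) ^ (N + 2) * E) * hwk + (w * iteratedDeriv 0 φ a) * hbc1
  rw [hTeq]
  -- bounds on the remainder pieces
  have hpiece1 : ∀ j : ℕ,
      ‖∫ t in (f j)..(f j + h / 2), iteratedDeriv (N + 1) φ t * ub (N + 1) h (f j) (1 / 2) t‖
        ≤ Cp * (h ^ (N + 1) * CB) * (h / 2) := by
    intro j
    have hle : f j ≤ f j + h / 2 := by linarith
    have hb : ∀ t ∈ Set.uIoc (f j) (f j + h / 2),
        ‖iteratedDeriv (N + 1) φ t * ub (N + 1) h (f j) (1 / 2) t‖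
          ≤ Cp * (h ^ (N + 1) * CB) := by
      intro t ht
      rw [Set.uIoc_of_le hle] at ht
      obtain ⟨ht1, ht2⟩ := ht
      rw [norm_mul]
      have harg : (t - f j) / h + 1 / 2 ∈ Set.Icc (0 : ℝ) 1 := by
        constructor
        · have h0 : 0 ≤ (t - f j) / h := div_nonneg (by linarith) hh.le
          linarith
        · have h1 : (t - f j) / h ≤ 1 / 2 := by rw [div_le_iff₀ hh]; linarith
          linarith
      have hub : ‖ub (N + 1) h (f j) (1 / 2) t‖ ≤ h ^ (N + 1) * CB := by
        unfold ub
        rw [norm_mul, norm_pow, Complex.norm_real, Real.norm_eq_abs, abs_of_pos hh]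
        exact mul_le_mul_of_nonneg_left (hCB _ harg) (by positivity)
      exact mul_le_mul (hCp t) hub (norm_nonneg _) hCpnn
    have hres := intervalIntegral.norm_integral_le_of_norm_le_const hb
    rwa [show f j + h / 2 - f j = h / 2 by ring,
      abs_of_pos (by linarith : (0 : ℝ) < h / 2)] at hres
  have hpiece2 : ∀ j : ℕ,
      ‖∫ t in (f j + h / 2)..(f j + h),
          iteratedDeriv (N + 1) φ t * ub (N + 1) h (f j) (-(1 / 2)) t‖
        ≤ Cp * (h ^ (N + 1) * CB) * (h / 2) := by
    intro j
    have hle : f j + h / 2 ≤ f j + h := by linarith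
    have hb : ∀ t ∈ Set.uIoc (f j + h / 2) (f j + h),
        ‖iteratedDeriv (N + 1) φ t * ub (N + 1) h (f j) (-(1 / 2)) t‖
          ≤ Cp * (h ^ (N + 1) * CB) := by
      intro t ht
      rw [Set.uIoc_of_le hle] at ht
      obtain ⟨ht1, ht2⟩ := ht
      rw [norm_mul]
      have harg : (t - f j) / h + (-(1 / 2)) ∈ Set.Icc (0 : ℝ) 1 := by
        constructor
        · have h0 : (1 : ℝ) / 2 ≤ (t - f j) / h := by rw [le_div_iff₀ hh]; linarith
          linarith
        · have h1 : (t - f j) / h ≤ 1 := by rw [div_le_iff₀ hh]; linarith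
          linarith
      have hub : ‖ub (N + 1) h (f j) (-(1 / 2)) t‖ ≤ h ^ (N + 1) * CB := by
        unfold ub
        rw [norm_mul, norm_pow, Complex.norm_real, Real.norm_eq_abs, abs_of_pos hh]
        exact mul_le_mul_of_nonneg_left (hCB _ harg) (by positivity)
      exact mul_le_mul (hCp t) hub (norm_nonneg _) hCpnn
    have hres := intervalIntegral.norm_integral_le_of_norm_le_const hb
    rwa [show f j + h - (f j + h / 2) = h / 2 by ring,
      abs_of_pos (by linarith : (0 : ℝ) < h / 2)] at hres
  have hE : ‖E‖ ≤ (M : ℝ) * (Cp * (h ^ (N + 1) * CB) * h) := by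
    rw [hEdef]
    refine le_trans (norm_sum_le _ _) ?_
    refine le_trans (Finset.sum_le_sum (fun j _ =>
      (norm_add_le _ _).trans (add_le_add (hpiece1 j) (hpiece2 j)))) ?_
    rw [Finset.sum_const, Finset.card_range, nsmul_eq_mul]
    apply le_of_eq
    ring
  -- final numeric estimate
  have hwnorm : ‖w‖ = 2 / (k : ℝ) := by
    rw [hwdef, norm_div, Complex.norm_natCast]
    norm_num
  have hknorm : ‖((k : ℕ) : ℂ) / 2‖ = (k : ℝ) / 2 := by
    rw [norm_div, Complex.norm_natCast]
    norm_num
  have hsgn : ‖(-1 : ℂ) ^ (N + 2)‖ = 1 := by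
    rw [norm_pow, norm_neg, norm_one, one_pow]
  have hstep1 : ‖-(bc (N + 1) * w ^ N * iteratedDeriv N φ a)
        + (-1 : ℂ) ^ (N + 2) * ((k : ℂ) / 2) * E‖
      ≤ ‖bc (N + 1)‖ * (2 / (k : ℝ)) ^ N * ‖iteratedDeriv N φ a‖
        + (k : ℝ) / 2 * ‖E‖ := by
    refine le_trans (norm_add_le _ _) ?_
    rw [norm_neg, norm_mul, norm_mul, norm_pow, hwnorm, norm_mul, norm_mul, hsgn, hknorm, one_mul]
  refine le_trans (hstep1.trans (add_le_add_right
    (mul_le_mul_of_nonneg_left hE (by positivity)) _)) ?_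
  -- now a purely real computation
  have hMcast : ((M : ℕ) : ℝ) = (k : ℝ) * (L : ℝ) := by rw [hMdef]; push_cast; ring
  have hkNpos : (0 : ℝ) < (k : ℝ) ^ N := by positivity
  have hterm1 : ‖bc (N + 1)‖ * (2 / (k : ℝ)) ^ N * ‖iteratedDeriv N φ a‖
      = ‖bc (N + 1)‖ * 2 ^ N * ‖iteratedDeriv N φ a‖ * ((k : ℝ) ^ N)⁻¹ := by
    rw [div_pow]
    field_simp
  have hterm2 : (k : ℝ) / 2 * ((M : ℝ) * (Cp * (h ^ (N + 1) * CB) * h))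
      = (L : ℝ) * 2 ^ (N + 1) * CB * Cp * ((k : ℝ) ^ N)⁻¹ := by
    rw [hhdef, hMcast, div_pow]
    have hkN2 : (k : ℝ) ^ (N + 1) ≠ 0 := by positivity
    field_simp
    ring
  rw [hterm1, hterm2]
  have hinv : (0 : ℝ) ≤ ((k : ℝ) ^ N)⁻¹ := by positivity
  rw [add_mul, add_mul, one_mul]
  linarith
end
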